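/- arXiv:1609.03132 — 4 statements merged into one kernel-verified Lean document; each statement's English description precedes it below -/
import Mathlib

section
/- Let (E,d) be a metric space, δ ∈ (0,1) and T > 0. For every f in V^{δ,∞}([0,T];E) (i.e. f is δ-Hölder continuous), the Riesz type variation norms converge: lim_{p→∞} ‖f‖_{V^{δ,p};[s,t]} = ‖f‖_{V^{δ,∞};[s,t]} = sup_{s ≤ u < v ≤ t} d(f_u,f_v)/|v-u|^δ, for every subinterval [s,t] ⊆ [0,T]. -/
open scoped ENNReal NNReal
open MeasureTheory

/-- `u 0, u 1, ..., u n` are the points of a partition of `[s,t]`. -/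
def IsPart (s t : ℝ) (n : ℕ) (u : ℕ → ℝ) : Prop :=
  u 0 = s ∧ u n = t ∧ ∀ i < n, u i < u (i + 1)

/-- Riesz-type sum of `f` along a partition, with parameters `δ, p`. -/
noncomputable def rieszSum {E : Type*} [PseudoEMetricSpace E] (f : ℝ → E) (δ p : ℝ)
    (n : ℕ) (u : ℕ → ℝ) : ℝ≥0∞ :=
  ∑ i ∈ Finset.range n,
    edist (f (u i)) (f (u (i + 1))) ^ p / ENNReal.ofReal (u (i + 1) - u i) ^ (δ * p - 1)

/-- Riesz type variation seminorm `‖f‖_{V^{δ,p};[s,t]}`. -/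
noncomputable def VNorm {E : Type*} [PseudoEMetricSpace E] (f : ℝ → E) (δ p : ℝ)
    (s t : ℝ) : ℝ≥0∞ :=
  (⨆ n, ⨆ u, ⨆ _ : IsPart s t n u, rieszSum f δ p n u) ^ (1 / p)

/-- `q`-variation seminorm `‖f‖_{q-var;[s,t]}`. -/
noncomputable def qVar {E : Type*} [PseudoEMetricSpace E] (f : ℝ → E) (q : ℝ)
    (s t : ℝ) : ℝ≥0∞ :=
  (⨆ n, ⨆ u, ⨆ _ : IsPart s t n u,
    ∑ i ∈ Finset.range n, edist (f (u i)) (f (u (i + 1))) ^ q) ^ (1 / q)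

/-- `δ`-Hölder seminorm on `[s,t]`, i.e. `‖f‖_{V^{δ,∞};[s,t]}`. -/
noncomputable def holNorm {E : Type*} [PseudoEMetricSpace E] (f : ℝ → E) (δ : ℝ)
    (s t : ℝ) : ℝ≥0∞ :=
  ⨆ u, ⨆ v, ⨆ _ : s ≤ u ∧ u < v ∧ v ≤ t,
    edist (f u) (f v) / ENNReal.ofReal (v - u) ^ δ

/-- Nikolskii seminorm `‖f‖_{N^{δ,p};[s,t]}`. -/
noncomputable def nikNorm {E : Type*} [PseudoEMetricSpace E] (f : ℝ → E) (δ p : ℝ)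
    (s t : ℝ) : ℝ≥0∞ :=
  ⨆ h : ℝ, ⨆ _ : 0 < h ∧ h ≤ t - s,
    ENNReal.ofReal h ^ (-δ) *
      (∫⁻ r in Set.Ioc s (t - h), edist (f r) (f (r + h)) ^ p) ^ (1 / p)

/-- Refined Nikolskii seminorm `‖f‖_{\hat N^{δ,p};[s,t]}`. -/
noncomputable def nikHatNorm {E : Type*} [PseudoEMetricSpace E] (f : ℝ → E) (δ p : ℝ)
    (s t : ℝ) : ℝ≥0∞ :=
  (⨆ n, ⨆ u, ⨆ _ : IsPart s t n u,
    ∑ i ∈ Finset.range n, nikNorm f δ p (u i) (u (i + 1)) ^ p) ^ (1 / p)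

/-- Mixed Hölder-variation seminorm `‖f‖_{\tilde V^{δ,p};[s,t]}`. -/
noncomputable def tildeVNorm {E : Type*} [PseudoEMetricSpace E] (f : ℝ → E) (δ p : ℝ)
    (s t : ℝ) : ℝ≥0∞ :=
  (⨆ n, ⨆ u, ⨆ _ : IsPart s t n u,
    ∑ i ∈ Finset.range n,
      qVar f (1 / δ) (u i) (u (i + 1)) ^ p
        / ENNReal.ofReal (u (i + 1) - u i) ^ (δ * p - 1)) ^ (1 / p)

/-- Fractional Sobolev (Sobolev–Slobodeckij) seminorm `‖f‖_{W^{δ,p};[s,t]}`. -/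
noncomputable def sobNorm {E : Type*} [PseudoEMetricSpace E] (f : ℝ → E) (δ p : ℝ)
    (s t : ℝ) : ℝ≥0∞ :=
  (∫⁻ v in Set.Ioc s t, ∫⁻ u in Set.Ioc s t,
    edist (f u) (f v) ^ p / ENNReal.ofReal |v - u| ^ (1 + δ * p)) ^ (1 / p)

/-! Each summand of the Riesz sum is at most `‖f‖_{V^{δ,∞}}^p (v - u)`, so
`‖f‖_{V^{δ,p};[s,t]} ≤ ‖f‖_{V^{δ,∞};[s,t]} (t - s)^{1/p}`; conversely a single interval `[u,v]` of a
partition gives `‖f‖_{V^{δ,p};[s,t]} ≥ d(f_u,f_v) / (v - u)^{δ - 1/p}`. Both bounds tend to the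
Hölder quotients as `p → ∞`. -/

open Filter Topology

namespace IsPart

variable {s t : ℝ} {n : ℕ} {w : ℕ → ℝ}

lemma of_lt (h : s < t) : IsPart s t 1 (fun i => if i = 0 then s else t) :=
  ⟨by simp, by simp, fun i hi => by simpa [Nat.lt_one_iff.mp hi] using h⟩

lemma extend_left (hw : IsPart s t n w) {s' : ℝ} (hs : s' < s) :
    IsPart s' t (n + 1) (fun i => if i = 0 then s' else w (i - 1)) := by
  refine ⟨by simp, by simpa using hw.2.1, fun i hi => ?_⟩
  rcases i with _ | i
  · simpa [hw.1] using hs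
  · simpa using hw.2.2 i (by omega)

lemma extend_right (hw : IsPart s t n w) {t' : ℝ} (ht : t < t') :
    IsPart s t' (n + 1) (fun i => if i ≤ n then w i else t') := by
  refine ⟨by simpa using hw.1, by simp, fun i hi => ?_⟩
  rcases (Nat.lt_succ_iff.mp hi).lt_or_eq with hi | rfl
  · simpa [hi.le, Nat.succ_le_of_lt hi] using hw.2.2 i hi
  · simpa [hw.2.1] using ht

lemma le_of_le (hw : IsPart s t n w) {i j : ℕ} (hij : i ≤ j) (hjn : j ≤ n) : w i ≤ w j := by
  induction j, hij using Nat.le_induction with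
  | base => exact le_rfl
  | succ k _ ih => exact (ih (by omega)).trans (hw.2.2 k (by omega)).le

lemma sum_ofReal_sub (hw : IsPart s t n w) :
    ∑ i ∈ Finset.range n, ENNReal.ofReal (w (i + 1) - w i) = ENNReal.ofReal (t - s) := by
  rw [← ENNReal.ofReal_sum_of_nonneg fun i hi => sub_nonneg.mpr (hw.2.2 i
    (Finset.mem_range.mp hi)).le, Finset.sum_range_sub w, hw.1, hw.2.1]

end IsPart

lemma exists_isPart_segment {s t u v : ℝ} (hsu : s ≤ u) (huv : u < v) (hvt : v ≤ t) :
    ∃ n w j, IsPart s t n w ∧ j < n ∧ w j = u ∧ w (j + 1) = v := by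
  obtain ⟨n, w, hw, hn, hw1⟩ : ∃ n w, IsPart u t n w ∧ 0 < n ∧ w 1 = v := by
    rcases hvt.eq_or_lt with rfl | hvt
    · exact ⟨1, _, IsPart.of_lt huv, one_pos, by simp⟩
    · exact ⟨2, _, (IsPart.of_lt huv).extend_right hvt, two_pos, by simp⟩
  rcases hsu.eq_or_lt with rfl | hsu
  · exact ⟨n, w, 0, hw, hn, hw.1, hw1⟩
  · exact ⟨n + 1, _, 1, hw.extend_left hsu, by omega, by simp [hw.1], by simp [hw1]⟩

lemma ENNReal.tendsto_ofReal_rpow {α : Type*} {l : Filter α} {g : α → ℝ} {c x : ℝ}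
    (hc : 0 < c) (hg : Tendsto g l (𝓝 x)) :
    Tendsto (fun a => ENNReal.ofReal c ^ g a) l (𝓝 (ENNReal.ofReal c ^ x)) := by
  simp_rw [ENNReal.ofReal_rpow_of_pos hc]
  exact (ENNReal.continuous_ofReal.tendsto _).comp
    ((Real.continuousAt_const_rpow hc.ne').tendsto.comp hg)

section Norms

variable {E : Type*} [PseudoEMetricSpace E] {f : ℝ → E} {δ p s t : ℝ}

lemma edist_div_le_holNorm {u v : ℝ} (hsu : s ≤ u) (huv : u < v) (hvt : v ≤ t) :
    edist (f u) (f v) / ENNReal.ofReal (v - u) ^ δ ≤ holNorm f δ s t :=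
  le_iSup₂_of_le u v (le_iSup_of_le ⟨hsu, huv, hvt⟩ le_rfl)

lemma holNorm_self : holNorm f δ s s = 0 :=
  le_antisymm (iSup₂_le fun _ _ => iSup_le fun h =>
    absurd ((h.1.trans_lt h.2.1).trans_le h.2.2) (lt_irrefl s)) zero_le

lemma edist_rpow_div_le_holNorm_rpow_mul (hp : 0 < p) {u v : ℝ} (hsu : s ≤ u) (huv : u < v)
    (hvt : v ≤ t) :
    edist (f u) (f v) ^ p / ENNReal.ofReal (v - u) ^ (δ * p - 1)
      ≤ holNorm f δ s t ^ p * ENNReal.ofReal (v - u) := by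
  set b := ENNReal.ofReal (v - u)
  have hb0 : b ≠ 0 := (ENNReal.ofReal_pos.mpr (sub_pos.mpr huv)).ne'
  have hbt : b ≠ ⊤ := ENNReal.ofReal_ne_top
  have hedist : edist (f u) (f v) ≤ holNorm f δ s t * b ^ δ :=
    (ENNReal.div_le_iff_le_mul (Or.inl (ENNReal.rpow_pos (pos_iff_ne_zero.mpr hb0) hbt).ne')
      (Or.inl (ENNReal.rpow_ne_top_of_ne_zero hb0 hbt))).mp (edist_div_le_holNorm hsu huv hvt)
  calc edist (f u) (f v) ^ p / b ^ (δ * p - 1)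
      ≤ (holNorm f δ s t * b ^ δ) ^ p / b ^ (δ * p - 1) := by gcongr
    _ = holNorm f δ s t ^ p * b := by
      rw [ENNReal.mul_rpow_of_nonneg _ _ hp.le, ← ENNReal.rpow_mul, mul_div_assoc,
        ← ENNReal.rpow_sub _ _ hb0 hbt, sub_sub_cancel, ENNReal.rpow_one]

lemma rieszSum_le_holNorm_rpow_mul (hp : 0 < p) {n : ℕ} {w : ℕ → ℝ} (hw : IsPart s t n w) :
    rieszSum f δ p n w ≤ holNorm f δ s t ^ p * ENNReal.ofReal (t - s) := by
  rw [← hw.sum_ofReal_sub, Finset.mul_sum]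
  refine Finset.sum_le_sum fun i hi => ?_
  have hi := Finset.mem_range.mp hi
  exact edist_rpow_div_le_holNorm_rpow_mul hp (hw.1 ▸ hw.le_of_le (Nat.zero_le i) hi.le)
    (hw.2.2 i hi) (hw.2.1 ▸ hw.le_of_le hi le_rfl)

lemma VNorm_le_holNorm_mul (hp : 0 < p) :
    VNorm f δ p s t ≤ holNorm f δ s t * ENNReal.ofReal (t - s) ^ (1 / p) := by
  calc VNorm f δ p s t ≤ (holNorm f δ s t ^ p * ENNReal.ofReal (t - s)) ^ (1 / p) :=
        ENNReal.rpow_le_rpow (iSup₂_le fun _ _ => iSup_le fun hw =>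
          rieszSum_le_holNorm_rpow_mul hp hw) (by positivity)
    _ = holNorm f δ s t * ENNReal.ofReal (t - s) ^ (1 / p) := by
      rw [ENNReal.mul_rpow_of_nonneg _ _ (by positivity), ← ENNReal.rpow_mul,
        mul_one_div_cancel hp.ne', ENNReal.rpow_one]

lemma edist_div_le_VNorm (hp : 0 < p) {u v : ℝ} (hsu : s ≤ u) (huv : u < v) (hvt : v ≤ t) :
    edist (f u) (f v) / ENNReal.ofReal (v - u) ^ (δ - 1 / p) ≤ VNorm f δ p s t := by
  obtain ⟨n, w, j, hw, hj, hwj, hwj1⟩ := exists_isPart_segment hsu huv hvt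
  have hterm : edist (f u) (f v) ^ p / ENNReal.ofReal (v - u) ^ (δ * p - 1)
      ≤ ⨆ n, ⨆ w, ⨆ _ : IsPart s t n w, rieszSum f δ p n w := by
    refine le_iSup₂_of_le n w (le_iSup_of_le hw ?_)
    rw [← hwj, ← hwj1]
    exact Finset.single_le_sum (f := fun i => edist (f (w i)) (f (w (i + 1))) ^ p
      / ENNReal.ofReal (w (i + 1) - w i) ^ (δ * p - 1)) (fun _ _ => zero_le)
      (Finset.mem_range.mpr hj)
  calc edist (f u) (f v) / ENNReal.ofReal (v - u) ^ (δ - 1 / p)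
      = (edist (f u) (f v) ^ p / ENNReal.ofReal (v - u) ^ (δ * p - 1)) ^ (1 / p) := by
        rw [ENNReal.div_rpow_of_nonneg _ _ (by positivity), ← ENNReal.rpow_mul,
          ← ENNReal.rpow_mul, mul_one_div_cancel hp.ne', ENNReal.rpow_one]
        congr 2
        field_simp
    _ ≤ VNorm f δ p s t := ENNReal.rpow_le_rpow hterm (by positivity)

lemma eventually_lt_VNorm {a : ℝ≥0∞} (ha : a < holNorm f δ s t) :
    ∀ᶠ p in atTop, a < VNorm f δ p s t := by
  obtain ⟨u, v, ⟨hsu, huv, hvt⟩, hlt⟩ : ∃ u v, (s ≤ u ∧ u < v ∧ v ≤ t) ∧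
      a < edist (f u) (f v) / ENNReal.ofReal (v - u) ^ δ := by
    simpa only [holNorm, lt_iSup_iff, exists_prop] using ha
  have hlim : Tendsto (fun p : ℝ => edist (f u) (f v) / ENNReal.ofReal (v - u) ^ (δ - 1 / p))
      atTop (𝓝 (edist (f u) (f v) / ENNReal.ofReal (v - u) ^ δ)) := by
    refine ENNReal.Tendsto.const_div (ENNReal.tendsto_ofReal_rpow (sub_pos.mpr huv) ?_)
      (Or.inl (ENNReal.rpow_ne_top_of_nonneg' (ENNReal.ofReal_pos.mpr (sub_pos.mpr huv))
        ENNReal.ofReal_ne_top))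
    simpa using tendsto_const_nhds.sub (tendsto_inv_atTop_zero (𝕜 := ℝ))
  filter_upwards [(tendsto_order.1 hlim).1 a hlt, eventually_gt_atTop 0] with p hap hp
  exact hap.trans_le (edist_div_le_VNorm hp hsu huv hvt)

lemma tendsto_holNorm_mul_rpow_inv (hst : s ≤ t) :
    Tendsto (fun p : ℝ => holNorm f δ s t * ENNReal.ofReal (t - s) ^ (1 / p)) atTop
      (𝓝 (holNorm f δ s t)) := by
  rcases hst.eq_or_lt with rfl | hst
  · rw [holNorm_self]
    simpa only [zero_mul] using tendsto_const_nhds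
  · simpa using ENNReal.Tendsto.const_mul (a := holNorm f δ s t)
      (ENNReal.tendsto_ofReal_rpow (sub_pos.mpr hst) tendsto_inv_atTop_zero) (Or.inl (by simp))

end Norms

theorem tendsto_VNorm_atTop_general {E : Type*} [PseudoEMetricSpace E] (T δ : ℝ) (f : ℝ → E) :
    ∀ s t, 0 ≤ s → s ≤ t → t ≤ T →
      Filter.Tendsto (fun p : ℝ => VNorm f δ p s t) Filter.atTop
        (nhds (holNorm f δ s t)) := by
  intro s t _ hst _
  refine tendsto_order.2 ⟨fun a ha => eventually_lt_VNorm ha, fun a ha => ?_⟩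
  filter_upwards [(tendsto_order.1 (tendsto_holNorm_mul_rpow_inv hst)).2 a ha,
    eventually_gt_atTop 0] with p hap hp
  exact (VNorm_le_holNorm_mul hp).trans_lt hap

/-- as `p → ∞`, the Riesz type variation converges to the Hölder seminorm. -/
theorem tendsto_VNorm_atTop {E : Type*} [PseudoEMetricSpace E] (T δ : ℝ) (f : ℝ → E)
    (hT : 0 < T) (hδ : 0 < δ) (hδ1 : δ < 1)
    (hf : ContinuousOn f (Set.Icc 0 T)) (hhol : holNorm f δ 0 T ≠ ⊤) :
    ∀ s t, 0 ≤ s → s ≤ t → t ≤ T →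
      Filter.Tendsto (fun p : ℝ => VNorm f δ p s t) Filter.atTop
        (nhds (holNorm f δ s t)) :=
  tendsto_VNorm_atTop_general T δ f
end

section
/- Let (E,d) be a metric space, T > 0, p ∈ [1,∞), and 0 < δ < δ' < 1. Then for every f ∈ N^{δ',p}([0,T];E) and every subinterval [s,t] ⊆ [0,T], the fractional Sobolev seminorm satisfies ‖f‖_{W^{δ,p};[s,t]} ≤ (2/((δ'-δ)p))^{1/p} · ‖f‖_{N^{δ',p};[s,t]} · (t-s)^{δ'-δ}. In particular N^{δ',p}([0,T];E) ⊆ W^{δ,p}([0,T];E). -/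
open scoped ENNReal NNReal
open MeasureTheory

/-!
The integrand of the Sobolev seminorm is symmetric in `(u, v)`, so the integral over `[s,t]²` is
at most twice the integral over `{u ≤ v}`. The shear `v = u + h` turns the latter into
`∫₀^{t-s} h^{-1-δp} ∫_s^{t-h} d(f_u, f_{u+h})^p du dh`, and the Nikolskii seminorm bounds the inner
integral by `h^{δ'p} ‖f‖^p`. What is left is
`2 ‖f‖^p ∫₀^{t-s} h^{(δ'-δ)p-1} dh = 2 ‖f‖^p (t-s)^{(δ'-δ)p} / ((δ'-δ)p)`.
-/

open Set

theorem lintegral_prod_le_two_mul_setLIntegral_of_swap {α : Type*} [MeasurableSpace α]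
    (μ : Measure α) [SFinite μ] {G : α × α → ℝ≥0∞} (hG : ∀ z, G z.swap = G z)
    {C : Set (α × α)} (hC : ∀ z, z ∈ C ∨ z.swap ∈ C) :
    ∫⁻ z, G z ∂μ.prod μ ≤ 2 * ∫⁻ z in C, G z ∂μ.prod μ := by
  have hcover : (univ : Set (α × α)) = C ∪ Prod.swap ⁻¹' C :=
    (eq_univ_of_forall hC).symm
  have hswap : ∫⁻ z in Prod.swap ⁻¹' C, G z ∂μ.prod μ = ∫⁻ z in C, G z ∂μ.prod μ := by
    simpa only [hG] using Measure.measurePreserving_swap.setLIntegral_comp_preimage_emb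
      MeasurableEquiv.prodComm.measurableEmbedding G C
  calc ∫⁻ z, G z ∂μ.prod μ = ∫⁻ z in C ∪ Prod.swap ⁻¹' C, G z ∂μ.prod μ := by
        rw [← hcover, Measure.restrict_univ]
    _ ≤ ∫⁻ z in C, G z ∂μ.prod μ + ∫⁻ z in Prod.swap ⁻¹' C, G z ∂μ.prod μ :=
        lintegral_union_le G C _
    _ = 2 * ∫⁻ z in C, G z ∂μ.prod μ := by rw [hswap, two_mul]

theorem measurableEmbedding_add_prod :
    MeasurableEmbedding (fun w : ℝ × ℝ => (w.1 + w.2, w.2)) :=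
  MeasurableEmbedding.of_measurable_inverse (by fun_prop)
    (by rw [range_eq_univ.2 fun z => ⟨(z.1 - z.2, z.2), by simp⟩]; exact .univ)
    (g := fun z => (z.1 - z.2, z.2)) (by fun_prop) fun w => by simp

theorem lintegral_lintegral_indicator_triangle_shear (s t : ℝ) (G : ℝ × ℝ → ℝ≥0∞) :
    ∫⁻ h, ∫⁻ u, ({z : ℝ × ℝ | z.2 ≤ z.1} ∩ Ioc s t ×ˢ Ioc s t).indicator G (h + u, u) =
      ∫⁻ h in Ioc 0 (t - s), ∫⁻ u in Ioc s (t - h), G (u + h, u) := by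
  set D := {z : ℝ × ℝ | z.2 ≤ z.1} ∩ Ioc s t ×ˢ Ioc s t
  rw [← lintegral_indicator measurableSet_Ioc]
  refine lintegral_congr_ae ?_
  -- the slice at `h = 0` is the diagonal, on which `G` need not vanish
  filter_upwards [Measure.ae_ne volume 0] with h h0
  have hmem : ∀ u, (h + u, u) ∈ D ↔ h ∈ Ioc 0 (t - s) ∧ u ∈ Ioc s (t - h) := by
    intro u
    simp only [D, mem_inter_iff, mem_ofPred_eq, mem_prod, mem_Ioc]
    constructor
    · rintro ⟨hle, ⟨-, hv⟩, hu, -⟩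
      exact ⟨⟨lt_of_le_of_ne (by linarith) h0.symm, by linarith⟩, hu, by linarith⟩
    · rintro ⟨⟨hh₀, -⟩, hu, hut⟩
      exact ⟨by linarith, ⟨by linarith, by linarith⟩, hu, by linarith⟩
  by_cases hh : h ∈ Ioc 0 (t - s)
  · rw [indicator_of_mem hh, ← lintegral_indicator measurableSet_Ioc]
    congr 1 with u
    simp only [indicator_apply, add_comm u h, hmem, hh, true_and]
  · rw [indicator_of_notMem hh]
    simp only [indicator_apply, hmem, hh, false_and, if_false, lintegral_zero]

theorem setLIntegral_Ioc_prod_le_two_mul_lintegral_shift (s t : ℝ) {G : ℝ × ℝ → ℝ≥0∞}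
    (hG : ∀ z, G z.swap = G z) :
    ∫⁻ z in Ioc s t ×ˢ Ioc s t, G z ≤
      2 * ∫⁻ h in Ioc 0 (t - s), ∫⁻ u in Ioc s (t - h), G (u + h, u) := by
  set D := {z : ℝ × ℝ | z.2 ≤ z.1} ∩ Ioc s t ×ˢ Ioc s t
  have hD : MeasurableSet D :=
    (measurableSet_le measurable_snd measurable_fst).inter
      (measurableSet_Ioc.prod measurableSet_Ioc)
  calc ∫⁻ z in Ioc s t ×ˢ Ioc s t, G z
      = ∫⁻ z, G z ∂(volume.restrict (Ioc s t)).prod (volume.restrict (Ioc s t)) := by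
        rw [Measure.prod_restrict, Measure.volume_eq_prod]
    _ ≤ 2 * ∫⁻ z in {z | z.2 ≤ z.1}, G z
          ∂(volume.restrict (Ioc s t)).prod (volume.restrict (Ioc s t)) :=
        lintegral_prod_le_two_mul_setLIntegral_of_swap _ hG fun z => (le_total z.2 z.1).imp id id
    _ = 2 * ∫⁻ w : ℝ × ℝ, D.indicator G (w.1 + w.2, w.2) := by
        rw [Measure.prod_restrict, Measure.restrict_restrict
          (measurableSet_le measurable_snd measurable_fst), ← lintegral_indicator hD,
          ← (measurePreserving_add_prod volume volume).lintegral_comp_emb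
            measurableEmbedding_add_prod]
        rfl
    _ ≤ 2 * ∫⁻ h, ∫⁻ u, D.indicator G (h + u, u) := by
        gcongr; exact lintegral_prod_le _
    _ = _ := by rw [lintegral_lintegral_indicator_triangle_shear]

theorem ContinuousOn.aemeasurable_edist_rpow_div {E : Type*} [PseudoEMetricSpace E]
    {f : ℝ → E} {s t : ℝ} (hf : ContinuousOn f (Icc s t)) (p q : ℝ) :
    AEMeasurable (fun z : ℝ × ℝ => edist (f z.2) (f z.1) ^ p / ENNReal.ofReal |z.1 - z.2| ^ q)
      (volume.restrict (Ioc s t ×ˢ Ioc s t)) := by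
  have hnum : ContinuousOn (fun z : ℝ × ℝ => edist (f z.2) (f z.1) ^ p) (Icc s t ×ˢ Icc s t) :=
    ENNReal.continuous_rpow_const.comp_continuousOn <| continuous_edist.comp_continuousOn <|
      (hf.comp continuous_snd.continuousOn fun _ hz => hz.2).prodMk
        (hf.comp continuous_fst.continuousOn fun _ hz => hz.1)
  have hden : Measurable fun z : ℝ × ℝ => ENNReal.ofReal |z.1 - z.2| ^ q := by fun_prop
  have hmono : volume.restrict (Ioc s t ×ˢ Ioc s t) ≤ volume.restrict (Icc s t ×ˢ Icc s t) :=
    Measure.restrict_mono (prod_mono Ioc_subset_Icc_self Ioc_subset_Icc_self) le_rfl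
  exact ((hnum.aemeasurable (measurableSet_Icc.prod measurableSet_Icc)).mono_measure hmono).div
    hden.aemeasurable

theorem sobNorm_rpow_le_two_mul_lintegral_shift {E : Type*} [PseudoEMetricSpace E]
    {f : ℝ → E} {δ p s t : ℝ} (hp : p ≠ 0) (hf : ContinuousOn f (Icc s t)) :
    sobNorm f δ p s t ^ p ≤ 2 * ∫⁻ h in Ioc 0 (t - s),
      (∫⁻ u in Ioc s (t - h), edist (f u) (f (u + h)) ^ p) / ENNReal.ofReal h ^ (1 + δ * p) := by
  set G : ℝ × ℝ → ℝ≥0∞ :=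
    fun z => edist (f z.2) (f z.1) ^ p / ENNReal.ofReal |z.1 - z.2| ^ (1 + δ * p)
  have hG : ∀ z, G z.swap = G z := fun z => by simp only [G, Prod.fst_swap, Prod.snd_swap,
    edist_comm, abs_sub_comm]
  calc sobNorm f δ p s t ^ p = ∫⁻ z in Ioc s t ×ˢ Ioc s t, G z := by
        rw [sobNorm, ← ENNReal.rpow_mul, one_div_mul_cancel hp, ENNReal.rpow_one,
          Measure.volume_eq_prod, setLIntegral_prod _ (hf.aemeasurable_edist_rpow_div _ _)]
    _ ≤ 2 * ∫⁻ h in Ioc 0 (t - s), ∫⁻ u in Ioc s (t - h), G (u + h, u) :=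
        setLIntegral_Ioc_prod_le_two_mul_lintegral_shift s t hG
    _ = _ := by
        congr 1
        refine setLIntegral_congr_fun measurableSet_Ioc fun h hh => ?_
        have hx : ENNReal.ofReal h ^ (1 + δ * p) ≠ 0 :=
          (ENNReal.rpow_pos (ENNReal.ofReal_pos.2 hh.1) ENNReal.ofReal_ne_top).ne'
        simp only [G, div_eq_mul_inv, add_sub_cancel_left, abs_of_pos hh.1]
        exact lintegral_mul_const' _ _ (ENNReal.inv_ne_top.2 hx)

theorem lintegral_edist_shift_le_nikNorm {E : Type*} [PseudoEMetricSpace E] (f : ℝ → E)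
    {δ p s t h : ℝ} (hp : 0 < p) (hh : h ∈ Ioc 0 (t - s)) :
    ∫⁻ r in Ioc s (t - h), edist (f r) (f (r + h)) ^ p ≤
      ENNReal.ofReal h ^ (δ * p) * nikNorm f δ p s t ^ p := by
  set I := ∫⁻ r in Ioc s (t - h), edist (f r) (f (r + h)) ^ p
  set x := ENNReal.ofReal h
  have hx0 : x ≠ 0 := (ENNReal.ofReal_pos.2 hh.1).ne'
  have hle : x ^ (-δ) * I ^ (1 / p) ≤ nikNorm f δ p s t :=
    le_iSup₂_of_le (f := fun h (_ : 0 < h ∧ h ≤ t - s) => ENNReal.ofReal h ^ (-δ) *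
      (∫⁻ r in Ioc s (t - h), edist (f r) (f (r + h)) ^ p) ^ (1 / p)) h hh le_rfl
  calc I = (x ^ δ * (x ^ (-δ) * I ^ (1 / p))) ^ p := by
        rw [← mul_assoc, ← ENNReal.rpow_add _ _ hx0 ENNReal.ofReal_ne_top, add_neg_cancel,
          ENNReal.rpow_zero, one_mul, ← ENNReal.rpow_mul, one_div_mul_cancel hp.ne',
          ENNReal.rpow_one]
    _ ≤ (x ^ δ * nikNorm f δ p s t) ^ p := by gcongr
    _ = x ^ (δ * p) * nikNorm f δ p s t ^ p := by
        rw [ENNReal.mul_rpow_of_nonneg _ _ hp.le, ← ENNReal.rpow_mul]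

theorem lintegral_Ioc_ofReal_rpow_sub_one {L α : ℝ} (hL : 0 ≤ L) (hα : 0 < α) :
    ∫⁻ h in Ioc 0 L, ENNReal.ofReal h ^ (α - 1) = ENNReal.ofReal (L ^ α / α) := by
  have hint : IntegrableOn (fun x : ℝ => x ^ (α - 1)) (Ioc 0 L) :=
    (intervalIntegral.intervalIntegrable_rpow' (by linarith)).1
  rw [setLIntegral_congr_fun measurableSet_Ioc fun x hx => ENNReal.ofReal_rpow_of_pos hx.1,
    ← ofReal_integral_eq_lintegral_ofReal hint
      ((ae_restrict_mem measurableSet_Ioc).mono fun x hx => Real.rpow_nonneg hx.1.le _),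
    ← intervalIntegral.integral_of_le hL, integral_rpow (Or.inl (by linarith)), sub_add_cancel,
    Real.zero_rpow hα.ne', sub_zero]

theorem lintegral_edist_shift_div_le_nikNorm {E : Type*} [PseudoEMetricSpace E] (f : ℝ → E)
    {δ δ' p s t h : ℝ} (hp : 0 < p) (hh : h ∈ Ioc 0 (t - s)) :
    (∫⁻ u in Ioc s (t - h), edist (f u) (f (u + h)) ^ p) / ENNReal.ofReal h ^ (1 + δ * p) ≤
      ENNReal.ofReal h ^ ((δ' - δ) * p - 1) * nikNorm f δ' p s t ^ p := by
  have hx0 : ENNReal.ofReal h ≠ 0 := (ENNReal.ofReal_pos.2 hh.1).ne'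
  calc _ ≤ ENNReal.ofReal h ^ (δ' * p) * nikNorm f δ' p s t ^ p /
          ENNReal.ofReal h ^ (1 + δ * p) := by
        gcongr; exact lintegral_edist_shift_le_nikNorm f hp hh
    _ = _ := by
        rw [div_eq_mul_inv, mul_right_comm, ← div_eq_mul_inv,
          ← ENNReal.rpow_sub _ _ hx0 ENNReal.ofReal_ne_top]
        congr 2
        ring

theorem sobNorm_rpow_le_nikNorm_rpow {E : Type*} [PseudoEMetricSpace E] {f : ℝ → E}
    {δ δ' p s t : ℝ} (hp : 0 < p) (hδδ' : δ < δ') (hst : s ≤ t)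
    (hf : ContinuousOn f (Icc s t)) :
    sobNorm f δ p s t ^ p ≤ ENNReal.ofReal (2 / ((δ' - δ) * p)) *
      ENNReal.ofReal (t - s) ^ ((δ' - δ) * p) * nikNorm f δ' p s t ^ p := by
  have hα : 0 < (δ' - δ) * p := mul_pos (sub_pos.2 hδδ') hp
  calc sobNorm f δ p s t ^ p
      ≤ 2 * ∫⁻ h in Ioc 0 (t - s),
          ENNReal.ofReal h ^ ((δ' - δ) * p - 1) * nikNorm f δ' p s t ^ p := by
        refine (sobNorm_rpow_le_two_mul_lintegral_shift hp.ne' hf).trans ?_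
        gcongr 2 * ?_
        exact setLIntegral_mono' measurableSet_Ioc fun h hh =>
          lintegral_edist_shift_div_le_nikNorm f hp hh
    _ = _ := by
        rw [lintegral_mul_const _ (by fun_prop), lintegral_Ioc_ofReal_rpow_sub_one
          (sub_nonneg.2 hst) hα, ENNReal.ofReal_rpow_of_nonneg (sub_nonneg.2 hst) hα.le,
          ← ENNReal.ofReal_mul (by positivity), ← mul_assoc, ← ENNReal.ofReal_ofNat 2,
          ← ENNReal.ofReal_mul zero_le_two]
        congr 2
        ring

theorem sobNorm_le_nikNorm_general {E : Type*} [PseudoEMetricSpace E] (T δ δ' p : ℝ) (f : ℝ → E)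
    (hp : 1 ≤ p) (hδδ' : δ < δ')
    (hf : ContinuousOn f (Set.Icc 0 T)) :
    ∀ s t, 0 ≤ s → s ≤ t → t ≤ T →
      sobNorm f δ p s t ≤
        ENNReal.ofReal (2 / ((δ' - δ) * p)) ^ (1 / p) * nikNorm f δ' p s t *
          ENNReal.ofReal (t - s) ^ (δ' - δ) := by
  intro s t hs hst htT
  have hp0 : 0 < p := by linarith
  have hpow := sobNorm_rpow_le_nikNorm_rpow hp0 hδδ' hst (hf.mono (Icc_subset_Icc hs htT))
  calc sobNorm f δ p s t = (sobNorm f δ p s t ^ p) ^ (1 / p) := by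
        rw [← ENNReal.rpow_mul, mul_one_div_cancel hp0.ne', ENNReal.rpow_one]
    _ ≤ (ENNReal.ofReal (2 / ((δ' - δ) * p)) * ENNReal.ofReal (t - s) ^ ((δ' - δ) * p) *
          nikNorm f δ' p s t ^ p) ^ (1 / p) := by gcongr
    _ = _ := by
        rw [ENNReal.mul_rpow_of_nonneg _ _ (by positivity),
          ENNReal.mul_rpow_of_nonneg _ _ (by positivity), ← ENNReal.rpow_mul, ← ENNReal.rpow_mul,
          mul_one_div_cancel hp0.ne', ENNReal.rpow_one, mul_one_div,
          mul_div_cancel_right₀ _ hp0.ne']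
        ring

/-- Nikolskii regularity embeds into fractional Sobolev regularity. -/
theorem sobNorm_le_nikNorm {E : Type*} [PseudoEMetricSpace E] (T δ δ' p : ℝ) (f : ℝ → E)
    (hT : 0 < T) (hp : 1 ≤ p) (hδ : 0 < δ) (hδδ' : δ < δ') (hδ' : δ' < 1)
    (hf : ContinuousOn f (Set.Icc 0 T)) (hfin : nikNorm f δ' p 0 T ≠ ⊤) :
    ∀ s t, 0 ≤ s → s ≤ t → t ≤ T →
      sobNorm f δ p s t ≤
        ENNReal.ofReal (2 / ((δ' - δ) * p)) ^ (1 / p) * nikNorm f δ' p s t *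
          ENNReal.ofReal (t - s) ^ (δ' - δ) :=
  sobNorm_le_nikNorm_general T δ δ' p f hp hδδ' hf
end

section
/- Let (E,d) be a metric space, δ ∈ (0,1) and p ∈ (1,∞) with δ - 1/p > 0. If f ∈ N^{δ,p}([0,T];E), then f is (δ-1/p)-Hölder continuous and there is a constant C = C(δ,p) such that d(f_s, f_t) ≤ C · ‖f‖_{N^{δ,p};[s,t]} · (t-s)^{δ-1/p} for all [s,t] ⊆ [0,T]. -/
open scoped ENNReal NNReal
open MeasureTheory

/-!
For an interval `I ⊆ [s, t]` of length `ℓ`, substituting `u = v + w` in `∫_I ∫_I d(f_u, f_v)` and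
applying Hölder's inequality to each difference integral `∫ d(f_v, f_{v+w}) dv` gives the mean
oscillation bound `⨍_I ⨍_I d(f_u, f_v) ≤ 2 ℓ^{δ-1/p} ‖f‖_{N^{δ,p};[s,t]}`. Hence the averages of
`d(f_x, ·)` over an interval and over a half of it differ by at most `4 ℓ^{δ-1/p} ‖f‖`. Along
dyadic intervals shrinking to `x` these errors form a geometric series with ratio
`2^{-(δ-1/p)} < 1`, and the averages themselves tend to `0` by continuity. Chaining from `[s, t]`
to both endpoints and averaging the triangle inequality `d(f_s, f_t) ≤ d(f_s, f_u) + d(f_t, f_u)`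
over `u ∈ [s, t]` gives the bound with `C = 8 / (1 - 2^{-(δ-1/p)})`.
-/

open Set Filter Topology

theorem ENNReal.ofReal_div_two_pow_rpow {α : ℝ} (hα : 0 ≤ α) (ℓ : ℝ) (n : ℕ) :
    ENNReal.ofReal (ℓ / 2 ^ n) ^ α = ENNReal.ofReal ℓ ^ α * (2 ^ (-α)) ^ n := by
  rw [ENNReal.ofReal_div_of_pos (by positivity), ENNReal.ofReal_pow zero_le_two,
    ENNReal.ofReal_ofNat, ENNReal.div_rpow_of_nonneg _ _ hα, ← ENNReal.rpow_natCast_mul,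
    mul_comm, ENNReal.rpow_mul_natCast, ENNReal.rpow_neg, ← ENNReal.inv_pow, div_eq_mul_inv]

namespace MeasureTheory

variable {α : Type*} [MeasurableSpace α] {μ : Measure α} {s t : Set α}

theorem setLAverage_add_left {f : α → ℝ≥0∞} (hf : Measurable f) (g : α → ℝ≥0∞) :
    ⨍⁻ x in s, (f x + g x) ∂μ = ⨍⁻ x in s, f x ∂μ + ⨍⁻ x in s, g x ∂μ := by
  rw [setLAverage_eq, setLAverage_eq, setLAverage_eq, lintegral_add_left hf, ENNReal.add_div]

theorem setLAverage_le_div_mul_setLAverage (hst : s ⊆ t) (ht0 : μ t ≠ 0) (httop : μ t ≠ ⊤)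
    (f : α → ℝ≥0∞) : ⨍⁻ x in s, f x ∂μ ≤ μ t / μ s * ⨍⁻ x in t, f x ∂μ := by
  rw [setLAverage_eq, setLAverage_eq]
  calc (∫⁻ x in s, f x ∂μ) / μ s ≤ (∫⁻ x in t, f x ∂μ) / μ s := by gcongr
    _ = μ t * (μ t)⁻¹ * ((∫⁻ x in t, f x ∂μ) / μ s) := by
        rw [ENNReal.mul_inv_cancel ht0 httop, one_mul]
    _ = μ t / μ s * ((∫⁻ x in t, f x ∂μ) / μ t) := by
        simp only [div_eq_mul_inv]; ring

end MeasureTheory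

theorem ENNReal.le_mul_inv_one_sub_of_le_add_pow {D : ℕ → ℝ≥0∞} {K r : ℝ≥0∞}
    (hstep : ∀ n, D n ≤ D (n + 1) + K * r ^ n) (hlim : Tendsto D atTop (𝓝 0)) :
    D 0 ≤ K * (1 - r)⁻¹ := by
  have htele : ∀ n, D 0 ≤ D n + ∑ k ∈ Finset.range n, K * r ^ k := fun n => by
    induction n with
    | zero => simp
    | succ n ih =>
      calc D 0 ≤ D n + ∑ k ∈ Finset.range n, K * r ^ k := ih
        _ ≤ D (n + 1) + K * r ^ n + ∑ k ∈ Finset.range n, K * r ^ k := by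
          gcongr; exact hstep n
        _ = _ := by rw [Finset.sum_range_succ]; ring
  have hgeom : ∀ n, ∑ k ∈ Finset.range n, K * r ^ k ≤ K * (1 - r)⁻¹ := fun n => by
    rw [← Finset.mul_sum, ← ENNReal.tsum_geometric]
    gcongr
    exact ENNReal.sum_le_tsum _
  exact ge_of_tendsto' (by simpa using hlim.add_const (K * (1 - r)⁻¹)) fun n =>
    (htele n).trans (by gcongr; exact hgeom n)

section Nikolskii

variable {E : Type*} [PseudoEMetricSpace E] {f g : ℝ → E} {δ p s t h : ℝ}

theorem nikNorm_congr (hfg : EqOn f g (Icc s t)) : nikNorm f δ p s t = nikNorm g δ p s t := by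
  unfold nikNorm
  refine iSup_congr fun h => iSup_congr fun hh => ?_
  congr 2
  refine setLIntegral_congr_fun measurableSet_Ioc fun r hr => ?_
  rw [hfg ⟨hr.1.le, by linarith [hr.2]⟩, hfg ⟨by linarith [hr.1], by linarith [hr.2]⟩]

theorem lintegral_edist_rpow_le_nikNorm (hh : 0 < h) (hht : h ≤ t - s) :
    (∫⁻ r in Ioc s (t - h), edist (f r) (f (r + h)) ^ p) ^ (1 / p) ≤
      ENNReal.ofReal h ^ δ * nikNorm f δ p s t := by
  have hne : ENNReal.ofReal h ≠ 0 := (ENNReal.ofReal_pos.2 hh).ne'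
  calc _ = ENNReal.ofReal h ^ δ * (ENNReal.ofReal h ^ (-δ) *
        (∫⁻ r in Ioc s (t - h), edist (f r) (f (r + h)) ^ p) ^ (1 / p)) := by
        rw [← mul_assoc, ← ENNReal.rpow_add _ _ hne ENNReal.ofReal_ne_top, add_neg_cancel,
          ENNReal.rpow_zero, one_mul]
    _ ≤ _ := by gcongr; exact le_iSup₂_of_le h ⟨hh, hht⟩ le_rfl

theorem setLIntegral_edist_le_nikNorm (hg : Continuous g) (hp : 1 < p) (hh : 0 < h)
    (hht : h ≤ t - s) {A : Set ℝ} (hA : A ⊆ Ioc s (t - h)) :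
    ∫⁻ u in A, edist (g u) (g (u + h)) ≤
      volume A ^ (1 - 1 / p) * (ENNReal.ofReal h ^ δ * nikNorm g δ p s t) := by
  have hpq : p.HolderConjugate (p / (p - 1)) :=
    (Real.holderConjugate_iff_eq_conjExponent hp).2 rfl
  have hmeas : Measurable fun u => edist (g u) (g (u + h)) :=
    (hg.edist (hg.comp (continuous_add_const h))).measurable
  have holder := ENNReal.lintegral_mul_le_Lp_mul_Lq (volume.restrict A) hpq
    hmeas.aemeasurable (aemeasurable_const (b := (1 : ℝ≥0∞)))
  simp only [Pi.mul_apply, mul_one, ENNReal.one_rpow, lintegral_one,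
    Measure.restrict_apply_univ] at holder
  rw [one_div_div, show (p - 1) / p = 1 - 1 / p by field_simp] at holder
  calc _ ≤ _ := holder
    _ ≤ (ENNReal.ofReal h ^ δ * nikNorm g δ p s t) * volume A ^ (1 - 1 / p) := by
      gcongr
      exact (ENNReal.rpow_le_rpow (lintegral_mono_set hA) (by positivity)).trans
        (lintegral_edist_rpow_le_nikNorm hh hht)
    _ = _ := mul_comm _ _

theorem setLIntegral_edist_add_le_nikNorm (hg : Continuous g) (hp : 1 < p) {w : ℝ}
    (hw : w ≠ 0) (hwt : |w| ≤ t - s) {A : Set ℝ}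
    (hA : ∀ v ∈ A, v ∈ Ioc s t ∧ v + w ∈ Ioc s t) :
    ∫⁻ v in A, edist (g v) (g (v + w)) ≤
      volume A ^ (1 - 1 / p) * (ENNReal.ofReal |w| ^ δ * nikNorm g δ p s t) := by
  rcases hw.lt_or_gt with hneg | hpos
  · rw [abs_of_neg hneg] at hwt ⊢
    rw [← (measurePreserving_add_right volume (-w)).setLIntegral_comp_preimage_emb
        (measurableEmbedding_addRight (-w)),
      ← measure_preimage_add_right volume (-w) A]
    calc _ = ∫⁻ r in (· + -w) ⁻¹' A, edist (g r) (g (r + -w)) :=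
          lintegral_congr fun r => by rw [neg_add_cancel_right, edist_comm]
      _ ≤ _ := setLIntegral_edist_le_nikNorm hg hp (by linarith) hwt fun r hr => by
          have := hA _ hr
          simp only [neg_add_cancel_right, mem_Ioc] at this
          constructor <;> linarith
  · rw [abs_of_pos hpos] at hwt ⊢
    exact setLIntegral_edist_le_nikNorm hg hp hpos hwt fun v hv =>
      ⟨(hA v hv).1.1, by linarith [(hA v hv).2.2]⟩

theorem setLIntegral_edist_add_le_indicator_nikNorm (hg : Continuous g) (hp : 1 < p)
    (hδ : 0 ≤ δ) {a b : ℝ} (hsa : s ≤ a) (hbt : b ≤ t) (w : ℝ) :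
    ∫⁻ v in {v | v ∈ Ioc a b ∧ v + w ∈ Ioc a b}, edist (g v) (g (v + w)) ≤
      (Ioo (-(b - a)) (b - a)).indicator (fun _ => ENNReal.ofReal (b - a) ^ (1 - 1 / p) *
        (ENNReal.ofReal (b - a) ^ δ * nikNorm g δ p s t)) w := by
  by_cases hw : w ∈ Ioo (-(b - a)) (b - a)
  · rw [indicator_of_mem hw]
    rcases eq_or_ne w 0 with rfl | hw0
    · simp
    have hwℓ : |w| ≤ b - a := abs_le.2 ⟨hw.1.le, hw.2.le⟩
    have hvol : volume {v | v ∈ Ioc a b ∧ v + w ∈ Ioc a b} ≤ ENNReal.ofReal (b - a) :=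
      (measure_mono fun v hv => hv.1).trans_eq Real.volume_Ioc
    have hp' : 0 ≤ 1 - 1 / p := by
      rw [sub_nonneg, div_le_one (by linarith)]; exact hp.le
    calc _ ≤ volume {v | v ∈ Ioc a b ∧ v + w ∈ Ioc a b} ^ (1 - 1 / p) *
          (ENNReal.ofReal |w| ^ δ * nikNorm g δ p s t) :=
        setLIntegral_edist_add_le_nikNorm hg hp hw0 (by linarith) fun v hv =>
          ⟨Ioc_subset_Ioc hsa hbt hv.1, Ioc_subset_Ioc hsa hbt hv.2⟩
      _ ≤ _ := by
        refine mul_le_mul' (ENNReal.rpow_le_rpow hvol hp') ?_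
        gcongr
  · have hempty : {v | v ∈ Ioc a b ∧ v + w ∈ Ioc a b} = ∅ :=
      eq_empty_of_forall_notMem fun v ⟨hv, hvw⟩ =>
        hw ⟨by linarith [hv.2, hvw.1], by linarith [hv.1, hvw.2]⟩
    rw [hempty]
    simp

theorem lintegral_lintegral_edist_le_nikNorm (hg : Continuous g) (hp : 1 < p) (hδ : 0 ≤ δ)
    {a b : ℝ} (hsa : s ≤ a) (hbt : b ≤ t) :
    ∫⁻ v in Ioc a b, ∫⁻ u in Ioc a b, edist (g v) (g u) ≤
      ENNReal.ofReal (2 * (b - a)) * (ENNReal.ofReal (b - a) ^ (1 - 1 / p) *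
        (ENNReal.ofReal (b - a) ^ δ * nikNorm g δ p s t)) := by
  set I := Ioc a b
  have hI : MeasurableSet I := measurableSet_Ioc
  -- `H v w` is the integrand after the substitution `u = v + w`
  let S : Set (ℝ × ℝ) := {q | q.1 ∈ I ∧ q.1 + q.2 ∈ I}
  let H : ℝ → ℝ → ℝ≥0∞ := fun v w =>
    S.indicator (fun q => edist (g q.1) (g (q.1 + q.2))) (v, w)
  have hH : Measurable (Function.uncurry H) :=
    ((hg.comp continuous_fst).edist
      (hg.comp (continuous_fst.add continuous_snd))).measurable.indicator
      ((measurable_fst hI).inter ((measurable_fst.add measurable_snd) hI))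
  have hsection_v : ∀ v, ∫⁻ w, H v w = I.indicator (fun v => ∫⁻ u in I, edist (g v) (g u)) v := by
    intro v
    by_cases hv : v ∈ I
    · rw [indicator_of_mem hv, ← lintegral_indicator hI,
        ← lintegral_add_left_eq_self (I.indicator fun u => edist (g v) (g u)) v]
      refine lintegral_congr fun w => ?_
      by_cases hw : v + w ∈ I
      · simp [H, S, hv, hw]
      · simp [H, S, hw]
    · simp [H, S, hv]
  have hsection_w : ∀ w, ∫⁻ v, H v w =
      ∫⁻ v in {v | v ∈ I ∧ v + w ∈ I}, edist (g v) (g (v + w)) := fun w => by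
    have hA : MeasurableSet {v | v ∈ I ∧ v + w ∈ I} := hI.inter (measurable_add_const w hI)
    rw [← lintegral_indicator hA]; rfl
  calc ∫⁻ v in I, ∫⁻ u in I, edist (g v) (g u)
      = ∫⁻ v, ∫⁻ w, H v w := by rw [← lintegral_indicator hI]; simp_rw [hsection_v]
    _ = ∫⁻ w, ∫⁻ v, H v w := lintegral_lintegral_swap hH.aemeasurable
    _ ≤ _ := by
      simp_rw [hsection_w]
      refine (lintegral_mono
        (setLIntegral_edist_add_le_indicator_nikNorm hg hp hδ hsa hbt)).trans_eq ?_
      rw [lintegral_indicator measurableSet_Ioo, setLIntegral_const, Real.volume_Ioo, mul_comm]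
      ring_nf

theorem setLAverage_setLAverage_edist_le_nikNorm (hg : Continuous g) (hp : 1 < p) (hδ : 0 ≤ δ)
    {a b : ℝ} (hab : a < b) (hsa : s ≤ a) (hbt : b ≤ t) :
    ⨍⁻ v in Ioc a b, (⨍⁻ u in Ioc a b, edist (g v) (g u) ∂volume) ∂volume ≤
      2 * ENNReal.ofReal (b - a) ^ (δ - 1 / p) * nikNorm g δ p s t := by
  set L := ENNReal.ofReal (b - a)
  have hL0 : L ≠ 0 := (ENNReal.ofReal_pos.2 (sub_pos.2 hab)).ne'
  have hLtop : L ≠ ⊤ := ENNReal.ofReal_ne_top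
  have hexp : L ^ (1 - 1 / p) * L ^ δ = L * L ^ (δ - 1 / p) := by
    rw [← ENNReal.rpow_add _ _ hL0 hLtop, show 1 - 1 / p + δ = 1 + (δ - 1 / p) by ring,
      ENNReal.rpow_add _ _ hL0 hLtop, ENNReal.rpow_one]
  calc ⨍⁻ v in Ioc a b, (⨍⁻ u in Ioc a b, edist (g v) (g u) ∂volume) ∂volume
      = (∫⁻ v in Ioc a b, ∫⁻ u in Ioc a b, edist (g v) (g u)) * L⁻¹ * L⁻¹ := by
        simp only [setLAverage_eq, Real.volume_Ioc, div_eq_mul_inv]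
        rw [lintegral_mul_const' _ _ (ENNReal.inv_ne_top.2 hL0)]
    _ ≤ 2 * L * (L ^ (1 - 1 / p) * (L ^ δ * nikNorm g δ p s t)) * L⁻¹ * L⁻¹ := by
        rw [← ENNReal.ofReal_ofNat 2, ← ENNReal.ofReal_mul zero_le_two]
        gcongr
        exact lintegral_lintegral_edist_le_nikNorm hg hp hδ hsa hbt
    _ = 2 * L ^ (δ - 1 / p) * nikNorm g δ p s t * (L * L⁻¹) * (L * L⁻¹) := by
        rw [← mul_assoc (L ^ (1 - 1 / p)), hexp]; ring
    _ = _ := by rw [ENNReal.mul_inv_cancel hL0 hLtop, mul_one, mul_one]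

theorem setLAverage_edist_le_setLAverage_add_nikNorm (hg : Continuous g) (hp : 1 < p)
    (hδ : 0 ≤ δ) {a b c d : ℝ} (hab : a < b) (hsa : s ≤ a) (hbt : b ≤ t)
    (hJ : Ioc c d ⊆ Ioc a b) (hcd : b - a = 2 * (d - c)) (x : ℝ) :
    ⨍⁻ u in Ioc a b, edist (g x) (g u) ∂volume ≤
      ⨍⁻ v in Ioc c d, edist (g x) (g v) ∂volume +
        4 * ENNReal.ofReal (b - a) ^ (δ - 1 / p) * nikNorm g δ p s t := by
  have hdc : 0 < d - c := by linarith
  have hI0 : volume (Ioc a b) ≠ 0 := by simp [hab]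
  have hJ0 : volume (Ioc c d) ≠ 0 := by simp [sub_pos.1 hdc]
  have hIJ : volume (Ioc a b) / volume (Ioc c d) = 2 := by
    rw [Real.volume_Ioc, Real.volume_Ioc, hcd, ENNReal.ofReal_mul zero_le_two,
      ENNReal.ofReal_ofNat, ENNReal.mul_div_cancel_right]
    · simpa using hdc
    · exact ENNReal.ofReal_ne_top
  have htriangle : ∀ v, ⨍⁻ u in Ioc a b, edist (g x) (g u) ∂volume ≤
      edist (g x) (g v) + ⨍⁻ u in Ioc a b, edist (g v) (g u) ∂volume := fun v => by
    rw [← setLAverage_const hI0 measure_Ioc_lt_top.ne (edist (g x) (g v)),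
      ← setLAverage_add_left measurable_const]
    exact laverage_mono_ae (Eventually.of_forall fun u => edist_triangle _ _ _)
  calc ⨍⁻ u in Ioc a b, edist (g x) (g u) ∂volume
      = ⨍⁻ _ in Ioc c d, (⨍⁻ u in Ioc a b, edist (g x) (g u) ∂volume) ∂volume :=
        (setLAverage_const hJ0 measure_Ioc_lt_top.ne _).symm
    _ ≤ ⨍⁻ v in Ioc c d, (edist (g x) (g v) + ⨍⁻ u in Ioc a b, edist (g v) (g u) ∂volume)
          ∂volume := laverage_mono_ae (Eventually.of_forall htriangle)
    _ = ⨍⁻ v in Ioc c d, edist (g x) (g v) ∂volume +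
          ⨍⁻ v in Ioc c d, (⨍⁻ u in Ioc a b, edist (g v) (g u) ∂volume) ∂volume :=
        setLAverage_add_left (continuous_const.edist hg).measurable _
    _ ≤ ⨍⁻ v in Ioc c d, edist (g x) (g v) ∂volume +
          2 * ⨍⁻ v in Ioc a b, (⨍⁻ u in Ioc a b, edist (g v) (g u) ∂volume) ∂volume := by
        rw [← hIJ]
        gcongr
        exact setLAverage_le_div_mul_setLAverage hJ hI0 measure_Ioc_lt_top.ne _
    _ ≤ ⨍⁻ v in Ioc c d, edist (g x) (g v) ∂volume +
          2 * (2 * ENNReal.ofReal (b - a) ^ (δ - 1 / p) * nikNorm g δ p s t) := by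
        gcongr
        exact setLAverage_setLAverage_edist_le_nikNorm hg hp hδ hab hsa hbt
    _ = _ := by ring

theorem tendsto_setLAverage_edist_nhds_zero {x : ℝ} (hg : ContinuousAt g x) {a b : ℕ → ℝ}
    (hlen : Tendsto (fun n => b n - a n) atTop (𝓝 0)) (hx : ∀ n, x ∈ Icc (a n) (b n)) :
    Tendsto (fun n => ⨍⁻ u in Ioc (a n) (b n), edist (g x) (g u) ∂volume) atTop (𝓝 0) := by
  refine ENNReal.tendsto_nhds_zero.2 fun ε hε => ?_
  obtain ⟨η, hη, hball⟩ :=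
    Metric.eventually_nhds_iff.1 (hg.eventually (Metric.closedEBall_mem_nhds (g x) hε))
  filter_upwards [hlen.eventually (gt_mem_nhds hη)] with n hn
  have hclose : ∀ u ∈ Ioc (a n) (b n), edist (g x) (g u) ≤ ε := fun u hu => by
    rw [edist_comm]
    refine hball ?_
    rw [Real.dist_eq, abs_lt]
    obtain ⟨hxa, hxb⟩ := hx n
    constructor <;> linarith [hu.1, hu.2]
  calc _ ≤ ⨍⁻ _ in Ioc (a n) (b n), ε ∂volume :=
        laverage_mono_ae (ae_restrict_of_forall_mem measurableSet_Ioc hclose)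
    _ ≤ ε := by
        rw [setLAverage_eq, setLIntegral_const, mul_div_assoc]
        exact mul_le_of_le_one_right' ENNReal.div_self_le_one

theorem setLAverage_edist_le_nikNorm_of_nested (hg : Continuous g) (hp : 1 < p)
    (hα : 0 < δ - 1 / p) {x : ℝ} {a b : ℕ → ℝ} (ha0 : a 0 = s) (hb0 : b 0 = t)
    (hlen : ∀ n, b n - a n = (t - s) / 2 ^ n) (ha : Monotone a) (hb : Antitone b)
    (hx : ∀ n, x ∈ Icc (a n) (b n)) (hst : s < t) :
    ⨍⁻ u in Ioc s t, edist (g x) (g u) ∂volume ≤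
      4 * (1 - 2 ^ (-(δ - 1 / p)))⁻¹ * ENNReal.ofReal (t - s) ^ (δ - 1 / p) *
        nikNorm g δ p s t := by
  have hδ : 0 ≤ δ := by linarith [one_div_pos.2 (zero_lt_one.trans hp)]
  set r : ℝ≥0∞ := 2 ^ (-(δ - 1 / p))
  set K := 4 * ENNReal.ofReal (t - s) ^ (δ - 1 / p) * nikNorm g δ p s t
  set D := fun n => ⨍⁻ u in Ioc (a n) (b n), edist (g x) (g u) ∂volume
  have hstep : ∀ n, D n ≤ D (n + 1) + K * r ^ n := fun n => by
    have h := setLAverage_edist_le_setLAverage_add_nikNorm hg hp hδ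
      (by linarith [hlen n, show 0 < (t - s) / 2 ^ n by positivity])
      (ha0 ▸ ha (Nat.zero_le n)) (hb0 ▸ hb (Nat.zero_le n))
      (Ioc_subset_Ioc (ha n.le_succ) (hb n.le_succ))
      (by rw [hlen, hlen, pow_succ]; field_simp) x
    rw [hlen, ENNReal.ofReal_div_two_pow_rpow hα.le] at h
    calc D n ≤ _ := h
      _ = D (n + 1) + K * r ^ n := by simp only [D, K, r]; ring
  have hlim : Tendsto D atTop (𝓝 0) := by
    refine tendsto_setLAverage_edist_nhds_zero hg.continuousAt ?_ hx
    simp_rw [hlen, div_eq_mul_inv, ← inv_pow]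
    simpa using (tendsto_pow_atTop_nhds_zero_of_lt_one (by norm_num)
      (by norm_num : (2 : ℝ)⁻¹ < 1)).const_mul (t - s)
  calc _ = D 0 := by simp only [D, ha0, hb0]
    _ ≤ K * (1 - r)⁻¹ := ENNReal.le_mul_inv_one_sub_of_le_add_pow hstep hlim
    _ = _ := by simp only [K, r]; ring

theorem edist_le_nikNorm_of_continuous (hg : Continuous g) (hp : 1 < p) (hα : 0 < δ - 1 / p)
    (hst : s ≤ t) :
    edist (g s) (g t) ≤ 8 * (1 - 2 ^ (-(δ - 1 / p)))⁻¹ * nikNorm g δ p s t *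
      ENNReal.ofReal (t - s) ^ (δ - 1 / p) := by
  rcases hst.eq_or_lt with rfl | hst
  · simp
  have hL : 0 < t - s := sub_pos.2 hst
  have hscale : Antitone fun n : ℕ => (t - s) / 2 ^ n := fun m n hmn =>
    div_le_div_of_nonneg_left hL.le (by positivity) (pow_le_pow_right₀ one_le_two hmn)
  have hs := setLAverage_edist_le_nikNorm_of_nested hg hp hα (x := s)
    (a := fun _ => s) (b := fun n => s + (t - s) / 2 ^ n) rfl (by simp) (fun n => by ring)
    monotone_const (fun m n hmn => by simpa using hscale hmn)
    (fun n => ⟨le_rfl, by simp only [le_add_iff_nonneg_right]; positivity⟩) hst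
  have ht := setLAverage_edist_le_nikNorm_of_nested hg hp hα (x := t)
    (a := fun n => t - (t - s) / 2 ^ n) (b := fun _ => t) (by simp) rfl (fun n => by ring)
    (fun m n hmn => sub_le_sub_left (hscale hmn) t) antitone_const
    (fun n => ⟨by simp only [sub_le_self_iff]; positivity, le_rfl⟩) hst
  have hI0 : volume (Ioc s t) ≠ 0 := by simp [hst]
  calc edist (g s) (g t) = ⨍⁻ _ in Ioc s t, edist (g s) (g t) ∂volume :=
        (setLAverage_const hI0 measure_Ioc_lt_top.ne _).symm
    _ ≤ ⨍⁻ u in Ioc s t, (edist (g s) (g u) + edist (g t) (g u)) ∂volume :=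
        laverage_mono_ae (Eventually.of_forall fun u => edist_triangle_right _ _ _)
    _ = ⨍⁻ u in Ioc s t, edist (g s) (g u) ∂volume + ⨍⁻ u in Ioc s t, edist (g t) (g u) ∂volume :=
        setLAverage_add_left (continuous_const.edist hg).measurable _
    _ ≤ _ := add_le_add hs ht
    _ = _ := by ring

theorem edist_le_nikNorm_of_continuousOn (hf : ContinuousOn f (Icc s t)) (hp : 1 < p)
    (hα : 0 < δ - 1 / p) (hst : s ≤ t) :
    edist (f s) (f t) ≤ 8 * (1 - 2 ^ (-(δ - 1 / p)))⁻¹ * nikNorm f δ p s t *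
      ENNReal.ofReal (t - s) ^ (δ - 1 / p) := by
  set g := IccExtend hst ((Icc s t).domRestrict f)
  have hgf : EqOn g f (Icc s t) := fun u hu => IccExtend_of_mem hst _ hu
  rw [← hgf (left_mem_Icc.2 hst), ← hgf (right_mem_Icc.2 hst), ← nikNorm_congr hgf]
  exact edist_le_nikNorm_of_continuous hf.domRestrict.Icc_extend' hp hα hst

end Nikolskii

theorem edist_le_nikNorm_general {E : Type*} [PseudoEMetricSpace E] (δ p : ℝ)
    (hp : 1 < p) (hδp : 0 < δ - 1 / p) :
    ∃ C : ℝ, 0 < C ∧ ∀ (T : ℝ) (f : ℝ → E), 0 < T →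
      ContinuousOn f (Set.Icc 0 T) → nikNorm f δ p 0 T ≠ ⊤ →
      ∀ s t, 0 ≤ s → s ≤ t → t ≤ T →
        edist (f s) (f t) ≤
          ENNReal.ofReal C * nikNorm f δ p s t * ENNReal.ofReal (t - s) ^ (δ - 1 / p) := by
  have hr : (2 : ℝ≥0∞) ^ (-(δ - 1 / p)) < 1 :=
    ENNReal.rpow_lt_one_of_one_lt_of_neg (by norm_num) (neg_neg_of_pos hδp)
  have hC0 : 8 * (1 - (2 : ℝ≥0∞) ^ (-(δ - 1 / p)))⁻¹ ≠ 0 :=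
    mul_ne_zero (by norm_num) (ENNReal.inv_ne_zero.2 (ENNReal.sub_ne_top ENNReal.one_ne_top))
  have hCtop : 8 * (1 - (2 : ℝ≥0∞) ^ (-(δ - 1 / p)))⁻¹ ≠ ⊤ :=
    ENNReal.mul_ne_top (by norm_num) (ENNReal.inv_ne_top.2 (tsub_pos_of_lt hr).ne')
  refine ⟨(8 * (1 - 2 ^ (-(δ - 1 / p)))⁻¹ : ℝ≥0∞).toReal, ENNReal.toReal_pos hC0 hCtop, ?_⟩
  intro T f _ hf _ s t hs hst ht
  rw [ENNReal.ofReal_toReal hCtop]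
  exact edist_le_nikNorm_of_continuousOn (hf.mono (Icc_subset_Icc hs ht)) hp hδp hst

/-- Nikolskii regular functions are `(δ-1/p)`-Hölder continuous. -/
theorem edist_le_nikNorm {E : Type*} [PseudoEMetricSpace E] (δ p : ℝ)
    (hδ : 0 < δ) (hδ1 : δ < 1) (hp : 1 < p) (hδp : 0 < δ - 1 / p) :
    ∃ C : ℝ, 0 < C ∧ ∀ (T : ℝ) (f : ℝ → E), 0 < T →
      ContinuousOn f (Set.Icc 0 T) → nikNorm f δ p 0 T ≠ ⊤ →
      ∀ s t, 0 ≤ s → s ≤ t → t ≤ T →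
        edist (f s) (f t) ≤
          ENNReal.ofReal C * nikNorm f δ p s t * ENNReal.ofReal (t - s) ^ (δ - 1 / p) :=
  edist_le_nikNorm_general δ p hp hδp
end

section
/- Let (E,d) be a metric space, T > 0, δ ∈ (0,1), p ∈ (1,∞) with δ > 1/p, and ε ∈ (0,1-δ). Then one has the inclusions W^{δ,p}([0,T];E) ⊆ V^{δ,p}([0,T];E) ⊆ N^{δ,p}([0,T];E) and N^{δ+ε,p}([0,T];E) ⊆ \hat N^{δ,p}([0,T];E) ⊆ N^{δ,p}([0,T];E). -/
open scoped ENNReal NNReal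
open MeasureTheory

/-!
The Riesz variation `rieszVar` (the `p`-th power of `VNorm`) and the double integral
`sobIntegral` (the `p`-th power of `sobNorm`) are superadditive over subdivisions of an interval.

* `W ⊆ V`: the Garsia–Rodemich–Rumsey estimate
  `d(f a, f b)^p ≤ C (b - a)^(δp - 1) ∬_{(a,b]²} d(f u, f v)^p / |v - u|^(1 + δp)`, obtained from
  dyadic chains from an interior point to `a` and to `b` whose points are chosen by Markov's
  inequality, is summed over the cells of a partition.
* `V ⊆ N`: `d(f r, f (r + h))^p ≤ h^(δp - 1) V(r, r + h)`, and `∫ V(r, r + h) dr ≤ 2 h V(s, t)`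
  since the windows `[r, r + h]` starting in one cell of length `h` stay in two consecutive
  cells.
* `N^{δ+ε} ⊆ N̂^δ`: in the coordinates `(v, h = u - v)` the double integral becomes
  `2 ∫_0^T h^(-1-βp) ∫ d(f r, f (r + h))^p dr dh ≤ 2 N^p ∫_0^T h^((δ + ε - β)p - 1) dh`, finite for
  `β = δ + ε / 2`; so `f ∈ W^β ⊆ V^β`, and on each cell `J` of a partition
  `N^δ(J)^p ≤ 2 T^((β - δ)p) V^β(J)^p`, which superadditivity sums.
* `N̂ ⊆ N`: take the trivial partition.
-/

open Set MeasureTheory Filter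

section Partition

variable {s t : ℝ} {n : ℕ} {u : ℕ → ℝ}

lemma IsPart.le_of_le_s12 (h : IsPart s t n u) {i j : ℕ} (hij : i ≤ j) (hjn : j ≤ n) :
    u i ≤ u j := by
  induction j, hij using Nat.le_induction with
  | base => exact le_rfl
  | succ j _ ih => exact (ih (by omega)).trans (h.2.2 j (by omega)).le

lemma IsPart.mem_Icc (h : IsPart s t n u) {i : ℕ} (hi : i ≤ n) : u i ∈ Icc s t :=
  ⟨h.1 ▸ h.le_of_le_s12 (Nat.zero_le i) hi, h.2.1 ▸ h.le_of_le_s12 hi le_rfl⟩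

lemma IsPart.le (h : IsPart s t n u) : s ≤ t :=
  (h.mem_Icc le_rfl).1.trans_eq h.2.1

lemma IsPart.init (h : IsPart s t (n + 1) u) : IsPart s (u n) n u :=
  ⟨h.1, rfl, fun i hi => h.2.2 i (by omega)⟩

lemma isPart_one (h : s < t) : IsPart s t 1 (fun i => if i = 0 then s else t) := by
  refine ⟨by simp, by simp, fun i hi => ?_⟩
  obtain rfl : i = 0 := by omega
  simpa using h

lemma exists_isPart (h : s ≤ t) : ∃ n u, IsPart s t n u := by
  rcases h.lt_or_eq with h | rfl
  · exact ⟨1, _, isPart_one h⟩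
  · exact ⟨0, fun _ => s, rfl, rfl, by simp⟩

def partAppend (n : ℕ) (u v : ℕ → ℝ) (i : ℕ) : ℝ :=
  if i < n then u i else v (i - n)

lemma IsPart.partAppend_of_le {r : ℝ} {m : ℕ} {v : ℕ → ℝ} (h : IsPart s t n u)
    (h' : IsPart t r m v) {i : ℕ} (hi : i ≤ n) : partAppend n u v i = u i := by
  rcases hi.lt_or_eq with hi | rfl
  · simp [partAppend, hi]
  · simp [partAppend, h'.1, h.2.1]

lemma IsPart.append {r : ℝ} {m : ℕ} {v : ℕ → ℝ} (h : IsPart s t n u) (h' : IsPart t r m v) :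
    IsPart s r (n + m) (partAppend n u v) := by
  refine ⟨(h.partAppend_of_le h' (Nat.zero_le n)).trans h.1, ?_, fun i hi => ?_⟩
  · simp [partAppend, h'.2.1]
  · rcases lt_or_ge i n with hin | hin
    · rw [h.partAppend_of_le h' hin.le, h.partAppend_of_le h' hin]
      exact h.2.2 i hin
    · simp only [partAppend, not_lt.2 hin, not_lt.2 (Nat.le_succ_of_le hin), if_false,
        (by omega : i + 1 - n = i - n + 1)]
      exact h'.2.2 (i - n) (by omega)

end Partition

lemma exists_nat_mem_Ioc {a r h : ℝ} (hh : 0 < h) (hr : a < r) :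
    ∃ j : ℕ, r ∈ Ioc (a + j * h) (a + (j + 1) * h) := by
  have hx : 0 < (r - a) / h := div_pos (by linarith) hh
  obtain ⟨h1, h2⟩ := (Nat.ceil_eq_iff (Nat.ceil_pos.2 hx).ne').1 rfl
  refine ⟨⌈(r - a) / h⌉₊ - 1, ?_, ?_⟩
  · linarith [(lt_div_iff₀ hh).1 h1]
  · have : ((⌈(r - a) / h⌉₊ - 1 : ℕ) : ℝ) + 1 = ⌈(r - a) / h⌉₊ := by
      rw [Nat.cast_sub (Nat.ceil_pos.2 hx), Nat.cast_one]; ring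
    rw [this]
    linarith [(div_le_iff₀ hh).1 h2]

def IntervalSuperadditive (φ : ℝ → ℝ → ℝ≥0∞) : Prop :=
  ∀ ⦃a b c : ℝ⦄, a ≤ b → b ≤ c → φ a b + φ b c ≤ φ a c

namespace IntervalSuperadditive

variable {φ : ℝ → ℝ → ℝ≥0∞}

lemma mono (hφ : IntervalSuperadditive φ) {a b a' b' : ℝ} (ha : a ≤ a') (hab : a' ≤ b')
    (hb : b' ≤ b) : φ a' b' ≤ φ a b :=
  calc φ a' b' ≤ φ a a' + φ a' b' := le_add_self
    _ ≤ φ a b' := hφ ha hab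
    _ ≤ φ a b' + φ b' b := le_self_add
    _ ≤ φ a b := hφ (ha.trans hab) hb

lemma sum_le_of_isPart (hφ : IntervalSuperadditive φ) {s t : ℝ} {n : ℕ} {u : ℕ → ℝ}
    (hP : IsPart s t n u) : ∑ i ∈ Finset.range n, φ (u i) (u (i + 1)) ≤ φ s t := by
  induction n generalizing t with
  | zero => simp
  | succ n ih =>
    rw [Finset.sum_range_succ, ← hP.2.1]
    exact (add_le_add_left (ih hP.init) _).trans (hφ hP.init.le (hP.2.2 n n.lt_succ_self).le)

/-- Cells two steps long cover every point at most twice. -/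
lemma sum_two_step_le (hφ : IntervalSuperadditive φ) {c : ℕ → ℝ} (hc : Monotone c) (m : ℕ) :
    ∑ j ∈ Finset.range m, φ (c j) (c (j + 2)) ≤ φ (c 0) (c m) + φ (c 0) (c (m + 1)) := by
  induction m with
  | zero => simp
  | succ m ih =>
    calc ∑ j ∈ Finset.range (m + 1), φ (c j) (c (j + 2))
        ≤ φ (c 0) (c m) + φ (c 0) (c (m + 1)) + φ (c m) (c (m + 2)) := by
          rw [Finset.sum_range_succ]; gcongr
      _ = φ (c 0) (c (m + 1)) + (φ (c 0) (c m) + φ (c m) (c (m + 2))) := by ring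
      _ ≤ φ (c 0) (c (m + 1)) + φ (c 0) (c (m + 1 + 1)) := by
          gcongr; exact hφ (hc (Nat.zero_le m)) (hc (by omega))

lemma setLIntegral_window_cell_le (hφ : IntervalSuperadditive φ) {a b h : ℝ} (hh : 0 < h)
    (j : ℕ) :
    ∫⁻ r in Ioc (a + j * h) (a + (j + 1) * h) ∩ Ioc a (b - h), φ r (r + h) ≤
      ENNReal.ofReal h * φ (min (a + j * h) b) (min (a + (j + 2 : ℕ) * h) b) :=
  calc ∫⁻ r in Ioc (a + j * h) (a + (j + 1) * h) ∩ Ioc a (b - h), φ r (r + h)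
      ≤ ∫⁻ _ in Ioc (a + j * h) (a + (j + 1) * h) ∩ Ioc a (b - h),
          φ (min (a + j * h) b) (min (a + (j + 2 : ℕ) * h) b) := by
        refine setLIntegral_mono measurable_const ?_
        rintro r ⟨⟨h1, h2⟩, -, h4⟩
        refine hφ.mono ((min_le_left _ _).trans h1.le) (by linarith) (le_min ?_ (by linarith))
        push_cast; linarith
    _ ≤ φ (min (a + j * h) b) (min (a + (j + 2 : ℕ) * h) b) * ENNReal.ofReal h := by
        rw [setLIntegral_const]
        gcongr
        refine (measure_mono inter_subset_left).trans_eq ?_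
        rw [Real.volume_Ioc]; ring_nf
    _ = _ := mul_comm _ _

/-- Cut `[a, b]` into cells of length `h`: a window `[r, r + h]` starting in the `j`-th cell lies
in cells `j` and `j + 1`. -/
lemma setLIntegral_window_le (hφ : IntervalSuperadditive φ) {a b h : ℝ} (hh : 0 < h) :
    ∫⁻ r in Ioc a (b - h), φ r (r + h) ≤ 2 * ENNReal.ofReal h * φ a b := by
  rcases lt_or_ge b a with hba | hab
  · simp [Ioc_eq_empty (by linarith : ¬ a < b - h)]
  set e : ℕ → ℝ := fun j => min (a + j * h) b
  have he : Monotone e := fun i j hij => min_le_min_right _ (by gcongr)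
  set D : ℕ → Set ℝ := fun j => Ioc (a + j * h) (a + (j + 1) * h) ∩ Ioc a (b - h)
  have hcover : Ioc a (b - h) ⊆ ⋃ j, D j := fun r hr => by
    obtain ⟨j, hj⟩ := exists_nat_mem_Ioc hh hr.1
    exact mem_iUnion.2 ⟨j, hj, hr⟩
  have hcell : ∀ j, ∫⁻ r in D j, φ r (r + h) ≤ ENNReal.ofReal h * φ (e j) (e (j + 2)) :=
    hφ.setLIntegral_window_cell_le hh
  have hsum : ∑' j, φ (e j) (e (j + 2)) ≤ 2 * φ a b := by
    refine ENNReal.tsum_le_of_sum_range_le fun m => (hφ.sum_two_step_le he m).trans ?_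
    have h0 : e 0 = a := by simp [e, hab]
    rw [two_mul, h0]
    gcongr <;> exact hφ.mono le_rfl (h0 ▸ he (Nat.zero_le _)) (min_le_right _ _)
  calc ∫⁻ r in Ioc a (b - h), φ r (r + h) ≤ ∫⁻ r in ⋃ j, D j, φ r (r + h) :=
        lintegral_mono_set hcover
    _ ≤ ∑' j, ∫⁻ r in D j, φ r (r + h) := lintegral_iUnion_le _ _
    _ ≤ ∑' j, ENNReal.ofReal h * φ (e j) (e (j + 2)) := ENNReal.tsum_le_tsum hcell
    _ ≤ ENNReal.ofReal h * (2 * φ a b) := by rw [ENNReal.tsum_mul_left]; gcongr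
    _ = 2 * ENNReal.ofReal h * φ a b := by ring

end IntervalSuperadditive

section Riesz

variable {E : Type*} [PseudoEMetricSpace E] {f : ℝ → E} {δ p s t : ℝ}

noncomputable def rieszVar (f : ℝ → E) (δ p s t : ℝ) : ℝ≥0∞ :=
  ⨆ n, ⨆ u, ⨆ _ : IsPart s t n u, rieszSum f δ p n u

lemma VNorm_eq_rieszVar_rpow : VNorm f δ p s t = rieszVar f δ p s t ^ (1 / p) := rfl

lemma rieszSum_le_rieszVar {n : ℕ} {u : ℕ → ℝ} (h : IsPart s t n u) :
    rieszSum f δ p n u ≤ rieszVar f δ p s t :=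
  le_iSup₂_of_le n u (le_iSup_of_le h le_rfl)

lemma rieszSum_append {r : ℝ} {n m : ℕ} {u v : ℕ → ℝ} (h : IsPart s t n u)
    (h' : IsPart t r m v) :
    rieszSum f δ p (n + m) (partAppend n u v) = rieszSum f δ p n u + rieszSum f δ p m v := by
  rw [rieszSum, Finset.sum_range_add]
  congr 1
  · refine Finset.sum_congr rfl fun i hi => ?_
    rw [h.partAppend_of_le h' (Finset.mem_range.1 hi).le,
      h.partAppend_of_le h' (Finset.mem_range.1 hi)]
  · refine Finset.sum_congr rfl fun i _ => ?_
    simp [partAppend, add_assoc]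

lemma intervalSuperadditive_rieszVar : IntervalSuperadditive (rieszVar f δ p) := by
  intro a b c hab hbc
  have hprod : ∀ s t, rieszVar f δ p s t =
      ⨆ q : ℕ × (ℕ → ℝ), ⨆ _ : IsPart s t q.1 q.2, rieszSum f δ p q.1 q.2 :=
    fun _ _ => by rw [iSup_prod]; rfl
  rw [hprod a b, hprod b c]
  obtain ⟨n, u, hP⟩ := exists_isPart hab
  obtain ⟨m, v, hQ⟩ := exists_isPart hbc
  refine ENNReal.biSup_add_biSup_le' ⟨(n, u), hP⟩ ⟨(m, v), hQ⟩ fun P hP Q hQ => ?_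
  rw [← rieszSum_append hP hQ]
  exact rieszSum_le_rieszVar (hP.append hQ)

lemma edist_rpow_div_le_rieszVar (hst : s < t) :
    edist (f s) (f t) ^ p / ENNReal.ofReal (t - s) ^ (δ * p - 1) ≤ rieszVar f δ p s t := by
  simpa [rieszSum] using rieszSum_le_rieszVar (f := f) (δ := δ) (p := p) (isPart_one hst)

end Riesz

lemma ENNReal.ofReal_rpow_ne_zero {x : ℝ} (hx : 0 < x) (y : ℝ) : ENNReal.ofReal x ^ y ≠ 0 :=
  (ENNReal.rpow_pos (ENNReal.ofReal_pos.2 hx) ENNReal.ofReal_ne_top).ne'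

lemma ENNReal.ofReal_rpow_ne_top {x : ℝ} (hx : 0 < x) (y : ℝ) : ENNReal.ofReal x ^ y ≠ ⊤ :=
  ENNReal.rpow_ne_top_of_ne_zero (ENNReal.ofReal_pos.2 hx).ne' ENNReal.ofReal_ne_top

lemma ENNReal.ofReal_rpow_add {x : ℝ} (hx : 0 < x) (y z : ℝ) :
    ENNReal.ofReal x ^ (y + z) = ENNReal.ofReal x ^ y * ENNReal.ofReal x ^ z :=
  ENNReal.rpow_add y z (ENNReal.ofReal_pos.2 hx).ne' ENNReal.ofReal_ne_top

lemma ENNReal.rpow_mul_one_div {p : ℝ} (hp : 0 < p) (x : ℝ≥0∞) (y : ℝ) :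
    (x ^ (y * p)) ^ (1 / p) = x ^ y := by
  rw [← ENNReal.rpow_mul, mul_one_div, mul_div_cancel_right₀ _ hp.ne']

section Nikolskii

variable {E : Type*} [PseudoEMetricSpace E] {f : ℝ → E} {β δ p s t h : ℝ}

noncomputable def shiftIntegral (f : ℝ → E) (p s t h : ℝ) : ℝ≥0∞ :=
  ∫⁻ r in Ioc s (t - h), edist (f r) (f (r + h)) ^ p

lemma shiftIntegral_le_nikNorm (hp : 0 < p) (hh : 0 < h) (hht : h ≤ t - s) :
    shiftIntegral f p s t h ≤ ENNReal.ofReal h ^ (δ * p) * nikNorm f δ p s t ^ p := by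
  have hle : shiftIntegral f p s t h ^ (1 / p) ≤ ENNReal.ofReal h ^ δ * nikNorm f δ p s t :=
    calc shiftIntegral f p s t h ^ (1 / p)
        = ENNReal.ofReal h ^ δ * (ENNReal.ofReal h ^ (-δ) * shiftIntegral f p s t h ^ (1 / p)) := by
          rw [← mul_assoc, ← ENNReal.ofReal_rpow_add hh, add_neg_cancel, ENNReal.rpow_zero, one_mul]
      _ ≤ ENNReal.ofReal h ^ δ * nikNorm f δ p s t := by
          gcongr; exact le_iSup₂_of_le h ⟨hh, hht⟩ le_rfl
  rw [one_div, ENNReal.rpow_inv_le_iff hp, ENNReal.mul_rpow_of_nonneg _ _ hp.le,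
    ← ENNReal.rpow_mul] at hle
  exact hle

lemma nikNorm_le_of_forall_shiftIntegral_le (hp : 0 < p) {C : ℝ≥0∞}
    (hC : ∀ h, 0 < h → h ≤ t - s → shiftIntegral f p s t h ≤ ENNReal.ofReal h ^ (δ * p) * C) :
    nikNorm f δ p s t ≤ C ^ (1 / p) := by
  refine iSup₂_le fun h ⟨hh, hht⟩ => ?_
  calc ENNReal.ofReal h ^ (-δ) * shiftIntegral f p s t h ^ (1 / p)
      ≤ ENNReal.ofReal h ^ (-δ) * (ENNReal.ofReal h ^ (δ * p) * C) ^ (1 / p) := by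
        gcongr; exact hC h hh hht
    _ = C ^ (1 / p) := by
        rw [ENNReal.mul_rpow_of_nonneg _ _ (by positivity), ENNReal.rpow_mul_one_div hp,
          ← mul_assoc, ← ENNReal.ofReal_rpow_add hh, neg_add_cancel, ENNReal.rpow_zero, one_mul]

lemma shiftIntegral_le_rieszVar (hh : 0 < h) :
    shiftIntegral f p s t h ≤ ENNReal.ofReal h ^ (β * p) * (2 * rieszVar f β p s t) := by
  have hpt : ∀ r, edist (f r) (f (r + h)) ^ p ≤
      ENNReal.ofReal h ^ (β * p - 1) * rieszVar f β p r (r + h) := fun r => by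
    have := edist_rpow_div_le_rieszVar (f := f) (δ := β) (p := p) (by linarith : r < r + h)
    rwa [add_sub_cancel_left, ENNReal.div_le_iff (ENNReal.ofReal_rpow_ne_zero hh _)
      (ENNReal.ofReal_rpow_ne_top hh _), mul_comm] at this
  calc shiftIntegral f p s t h
      ≤ ∫⁻ r in Ioc s (t - h), ENNReal.ofReal h ^ (β * p - 1) * rieszVar f β p r (r + h) :=
        lintegral_mono hpt
    _ = ENNReal.ofReal h ^ (β * p - 1) * ∫⁻ r in Ioc s (t - h), rieszVar f β p r (r + h) :=
        lintegral_const_mul' _ _ (ENNReal.ofReal_rpow_ne_top hh _)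
    _ ≤ ENNReal.ofReal h ^ (β * p - 1) * (2 * ENNReal.ofReal h * rieszVar f β p s t) := by
        gcongr; exact intervalSuperadditive_rieszVar.setLIntegral_window_le hh
    _ = ENNReal.ofReal h ^ (β * p) * (2 * rieszVar f β p s t) := by
        conv_rhs => rw [← sub_add_cancel (β * p) 1, ENNReal.ofReal_rpow_add hh, ENNReal.rpow_one]
        ring

lemma nikNorm_le_VNorm (hp : 0 < p) (hδβ : δ ≤ β) :
    nikNorm f δ p s t ≤
      (2 * ENNReal.ofReal (t - s) ^ ((β - δ) * p)) ^ (1 / p) * VNorm f β p s t := by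
  rw [VNorm_eq_rieszVar_rpow, ← ENNReal.mul_rpow_of_nonneg _ _ (by positivity)]
  refine nikNorm_le_of_forall_shiftIntegral_le hp fun h hh hht => ?_
  calc shiftIntegral f p s t h ≤ ENNReal.ofReal h ^ (β * p) * (2 * rieszVar f β p s t) :=
        shiftIntegral_le_rieszVar hh
    _ = ENNReal.ofReal h ^ (δ * p) *
          (ENNReal.ofReal h ^ ((β - δ) * p) * (2 * rieszVar f β p s t)) := by
        rw [← mul_assoc (ENNReal.ofReal h ^ (δ * p)), ← ENNReal.ofReal_rpow_add hh]; ring_nf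
    _ ≤ ENNReal.ofReal h ^ (δ * p) *
          (ENNReal.ofReal (t - s) ^ ((β - δ) * p) * (2 * rieszVar f β p s t)) := by
        gcongr
    _ = ENNReal.ofReal h ^ (δ * p) *
          (2 * ENNReal.ofReal (t - s) ^ ((β - δ) * p) * rieszVar f β p s t) := by ring

lemma nikHatNorm_le_VNorm (hp : 0 < p) (hδβ : δ ≤ β) :
    nikHatNorm f δ p s t ≤
      (2 * ENNReal.ofReal (t - s) ^ ((β - δ) * p)) ^ (1 / p) * VNorm f β p s t := by
  rw [VNorm_eq_rieszVar_rpow, ← ENNReal.mul_rpow_of_nonneg _ _ (by positivity)]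
  refine ENNReal.rpow_le_rpow (iSup₂_le fun n u => iSup_le fun hP => ?_) (by positivity)
  calc ∑ i ∈ Finset.range n, nikNorm f δ p (u i) (u (i + 1)) ^ p
      ≤ ∑ i ∈ Finset.range n,
          2 * ENNReal.ofReal (t - s) ^ ((β - δ) * p) * rieszVar f β p (u i) (u (i + 1)) := by
        gcongr with i hi
        have hcell := nikNorm_le_VNorm (f := f) (s := u i) (t := u (i + 1)) hp hδβ
        rw [VNorm_eq_rieszVar_rpow, ← ENNReal.mul_rpow_of_nonneg _ _ (by positivity), one_div,
          ENNReal.le_rpow_inv_iff hp] at hcell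
        refine hcell.trans ?_
        have hi := Finset.mem_range.1 hi
        gcongr
        exacts [(hP.mem_Icc hi).2, (hP.mem_Icc hi.le).1]
    _ = 2 * ENNReal.ofReal (t - s) ^ ((β - δ) * p) *
          ∑ i ∈ Finset.range n, rieszVar f β p (u i) (u (i + 1)) := (Finset.mul_sum ..).symm
    _ ≤ 2 * ENNReal.ofReal (t - s) ^ ((β - δ) * p) * rieszVar f β p s t := by
        gcongr; exact intervalSuperadditive_rieszVar.sum_le_of_isPart hP

lemma nikNorm_le_nikHatNorm (hp : 0 < p) : nikNorm f δ p s t ≤ nikHatNorm f δ p s t := by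
  rcases le_or_gt t s with hts | hst
  · exact iSup₂_le fun h ⟨hh, hht⟩ => absurd hht (by linarith)
  rw [nikHatNorm, one_div, ENNReal.le_rpow_inv_iff hp]
  exact le_iSup₂_of_le 1 _ (le_iSup_of_le (isPart_one hst) (by simp))

end Nikolskii

section Chain

variable {α : Type*} [MeasurableSpace α] {μ : Measure α}

lemma ENNReal.div_four_mul_div {x y : ℝ≥0∞} (hx0 : x ≠ 0) (hxt : x ≠ ⊤) (hy0 : y ≠ 0)
    (hyt : y ≠ ⊤) : x / (4 * x / y) = y / 4 := by
  rw [div_eq_mul_inv x, ENNReal.inv_div (Or.inl hyt) (Or.inl hy0), ← mul_div_assoc,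
    mul_comm 4 x, ENNReal.mul_div_mul_left _ _ hx0 hxt]

/-- Two Markov inequalities on a set `A`: each rules out at most a quarter of `A`. -/
lemma exists_mem_le_four_mul_div {A : Set α} (hA0 : μ A ≠ 0) (hAt : μ A ≠ ⊤) {F G : α → ℝ≥0∞}
    (hF : AEMeasurable F (μ.restrict A)) (hG : AEMeasurable G (μ.restrict A)) {M N : ℝ≥0∞}
    (hM0 : M ≠ 0) (hMt : M ≠ ⊤) (hN0 : N ≠ 0) (hNt : N ≠ ⊤)
    (hFM : ∫⁻ x in A, F x ∂μ ≤ M) (hGN : ∫⁻ x in A, G x ∂μ ≤ N) :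
    ∃ x ∈ A, F x ≤ 4 * M / μ A ∧ G x ≤ 4 * N / μ A := by
  have hc0 : ∀ {M}, M ≠ 0 → 4 * M / μ A ≠ 0 := fun hM =>
    (ENNReal.div_pos (mul_ne_zero (by norm_num) hM) hAt).ne'
  have hct : ∀ {M}, M ≠ ⊤ → 4 * M / μ A ≠ ⊤ := fun hM =>
    ENNReal.div_ne_top (ENNReal.mul_ne_top (by norm_num) hM) hA0
  have hmarkov : ∀ {F : α → ℝ≥0∞} {M}, AEMeasurable F (μ.restrict A) → M ≠ 0 → M ≠ ⊤ →
      ∫⁻ x in A, F x ∂μ ≤ M → μ.restrict A {x | 4 * M / μ A ≤ F x} ≤ μ A / 4 := by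
    intro F M hF hM0 hMt hFM
    refine (meas_ge_le_lintegral_div hF (hc0 hM0) (hct hMt)).trans ?_
    rw [← ENNReal.div_four_mul_div hM0 hMt hA0 hAt]
    gcongr
  by_contra! hbad
  have hcover : A ⊆ {x | 4 * M / μ A ≤ F x} ∪ {x | 4 * N / μ A ≤ G x} := fun x hx => by
    by_cases hFx : F x ≤ 4 * M / μ A
    · exact Or.inr (hbad x hx hFx).le
    · exact Or.inl (not_le.1 hFx).le
  have : μ A ≤ μ A / 2 :=
    calc μ A = μ.restrict A A := (Measure.restrict_apply_self _ _).symm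
      _ ≤ μ.restrict A {x | 4 * M / μ A ≤ F x} + μ.restrict A {x | 4 * N / μ A ≤ G x} :=
        (measure_mono hcover).trans (measure_union_le _ _)
      _ ≤ μ A / 4 + μ A / 4 := add_le_add (hmarkov hF hM0 hMt hFM) (hmarkov hG hN0 hNt hGN)
      _ = μ A / 2 := by
        rw [ENNReal.div_add_div_same, ← two_mul, show (4 : ℝ≥0∞) = 2 * 2 by norm_num,
          ENNReal.mul_div_mul_left _ _ (by norm_num) (by norm_num)]
  exact (ENNReal.half_lt_self hA0 hAt).not_ge this

lemma exists_seq_of_forall_exists {β : Type*} {P : ℕ → β → Prop} {R : ℕ → β → β → Prop}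
    {x₀ : β} (h₀ : P 0 x₀) (h : ∀ k x, P k x → ∃ y, P (k + 1) y ∧ R k x y) :
    ∃ x : ℕ → β, x 0 = x₀ ∧ ∀ k, P k (x k) ∧ R k (x k) (x (k + 1)) := by
  choose F hFP hFR using h
  let y : (k : ℕ) → {z // P k z} :=
    fun k => Nat.rec ⟨x₀, h₀⟩ (fun k z => ⟨F k z z.2, hFP k z z.2⟩) k
  refine ⟨fun k => (y k).1, rfl, fun k => ⟨(y k).2, ?_⟩⟩
  exact hFR k _ (y k).2

/-- The chain of the Garsia–Rodemich–Rumsey argument. The invariant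
`∫_{S (k + 1)} K (·) (w k) ≤ 4 J / μ (S k)` is what lets Markov's inequality pick `w (k + 1)`. -/
lemma exists_chain_of_lintegral_le [SFinite μ] {K : α → α → ℝ≥0∞}
    (hK : Measurable (Function.uncurry K)) {S : ℕ → Set α} (hS0 : ∀ k, μ (S k) ≠ 0)
    (hSt : ∀ k, μ (S k) ≠ ⊤) {J : ℝ≥0∞} (hJ0 : J ≠ 0) (hJt : J ≠ ⊤)
    (hJ : ∀ k, ∫⁻ v in S k, ∫⁻ u in S (k + 1), K u v ∂μ ∂μ ≤ J) {w₀ : α} (hw₀ : w₀ ∈ S 0)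
    (hw₀' : ∫⁻ u in S 1, K u w₀ ∂μ ≤ 4 * J / μ (S 0)) :
    ∃ w : ℕ → α, w 0 = w₀ ∧ ∀ k, w k ∈ S k ∧
      K (w (k + 1)) (w k) ≤ 4 * (4 * J / μ (S k)) / μ (S (k + 1)) := by
  have hQ0 : ∀ k, 4 * J / μ (S k) ≠ 0 := fun k =>
    (ENNReal.div_pos (mul_ne_zero (by norm_num) hJ0) (hSt k)).ne'
  have hQt : ∀ k, 4 * J / μ (S k) ≠ ⊤ := fun k =>
    ENNReal.div_ne_top (ENNReal.mul_ne_top (by norm_num) hJt) (hS0 k)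
  obtain ⟨w, hw0, hw⟩ := exists_seq_of_forall_exists
    (P := fun k w => w ∈ S k ∧ ∫⁻ u in S (k + 1), K u w ∂μ ≤ 4 * J / μ (S k))
    (R := fun k w w' => K w' w ≤ 4 * (4 * J / μ (S k)) / μ (S (k + 1))) ⟨hw₀, hw₀'⟩
    fun k w ⟨_, hwk⟩ => by
      obtain ⟨w', hw', h1, h2⟩ := exists_mem_le_four_mul_div (hS0 (k + 1)) (hSt (k + 1))
        ((hK.comp measurable_swap).lintegral_prod_right').aemeasurable
        (hK.comp (measurable_id.prodMk measurable_const)).aemeasurable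
        hJ0 hJt (hQ0 k) (hQt k) (hJ (k + 1)) hwk
      exact ⟨w', ⟨hw', h1⟩, h2⟩
  exact ⟨w, hw0, fun k => ⟨(hw k).1.1, (hw k).2⟩⟩

end Chain

lemma exists_continuous_eqOn_Icc {E : Type*} [TopologicalSpace E] {f : ℝ → E} {a b : ℝ}
    (hab : a ≤ b) (hf : ContinuousOn f (Icc a b)) :
    ∃ g : ℝ → E, Continuous g ∧ EqOn f g (Icc a b) := by
  refine ⟨fun x => f (max a (min b x)),
    hf.comp_continuous (continuous_const.max (continuous_const.min continuous_id))
      fun x => ⟨le_max_left _ _, max_le hab (min_le_left _ _)⟩, fun x hx => ?_⟩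
  simp [min_eq_right hx.2, max_eq_right hx.1]

section Sobolev

variable {E : Type*} [PseudoEMetricSpace E] {f g : ℝ → E} {β p s t : ℝ}

noncomputable def sobKernel (f : ℝ → E) (β p u v : ℝ) : ℝ≥0∞ :=
  edist (f u) (f v) ^ p / ENNReal.ofReal |v - u| ^ (1 + β * p)

noncomputable def sobIntegral (f : ℝ → E) (β p s t : ℝ) : ℝ≥0∞ :=
  ∫⁻ v in Ioc s t, ∫⁻ u in Ioc s t, sobKernel f β p u v

lemma sobNorm_eq_sobIntegral_rpow : sobNorm f β p s t = sobIntegral f β p s t ^ (1 / p) := rfl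

lemma sobKernel_comm (u v : ℝ) : sobKernel f β p u v = sobKernel f β p v u := by
  rw [sobKernel, sobKernel, edist_comm, abs_sub_comm]

lemma measurable_sobKernel (hg : Continuous g) :
    Measurable (Function.uncurry (sobKernel g β p)) :=
  (((hg.comp continuous_fst).edist (hg.comp continuous_snd)).measurable.pow_const _).div
    ((ENNReal.continuous_ofReal.comp
      (continuous_snd.sub continuous_fst).abs).measurable.pow_const _)

lemma edist_rpow_le_sobKernel_mul (hp : 0 < p) (hβp : 0 ≤ 1 + β * p) {u v ρ : ℝ}
    (huv : |v - u| ≤ ρ) :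
    edist (g u) (g v) ^ p ≤ sobKernel g β p u v * ENNReal.ofReal ρ ^ (1 + β * p) := by
  rcases eq_or_ne u v with rfl | huv'
  · simp [ENNReal.zero_rpow_of_pos hp]
  have habs : 0 < |v - u| := abs_pos.2 (sub_ne_zero.2 huv'.symm)
  calc edist (g u) (g v) ^ p = sobKernel g β p u v * ENNReal.ofReal |v - u| ^ (1 + β * p) :=
        (ENNReal.div_mul_cancel (ENNReal.ofReal_rpow_ne_zero habs _)
          (ENNReal.ofReal_rpow_ne_top habs _)).symm
    _ ≤ sobKernel g β p u v * ENNReal.ofReal ρ ^ (1 + β * p) := by gcongr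

lemma setLIntegral_setLIntegral_sobKernel_le {S S' : Set ℝ} (hS : S ⊆ Ioc s t)
    (hS' : S' ⊆ Ioc s t) : ∫⁻ v in S, ∫⁻ u in S', sobKernel f β p u v ≤ sobIntegral f β p s t :=
  (lintegral_mono fun _ => lintegral_mono_set hS').trans (lintegral_mono_set hS)

lemma sobIntegral_congr (h : EqOn f g (Icc s t)) :
    sobIntegral f β p s t = sobIntegral g β p s t := by
  refine setLIntegral_congr_fun measurableSet_Ioc fun v hv => ?_
  refine setLIntegral_congr_fun measurableSet_Ioc fun u hu => ?_
  rw [sobKernel, sobKernel, h (Ioc_subset_Icc_self hu), h (Ioc_subset_Icc_self hv)]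

lemma intervalSuperadditive_sobIntegral : IntervalSuperadditive (sobIntegral f β p) := by
  intro a b c hab hbc
  calc sobIntegral f β p a b + sobIntegral f β p b c
      ≤ (∫⁻ v in Ioc a b, ∫⁻ u in Ioc a c, sobKernel f β p u v) +
          ∫⁻ v in Ioc b c, ∫⁻ u in Ioc a c, sobKernel f β p u v :=
        add_le_add (lintegral_mono fun _ => lintegral_mono_set (Ioc_subset_Ioc_right hbc))
          (lintegral_mono fun _ => lintegral_mono_set (Ioc_subset_Ioc_left hab))
    _ = sobIntegral f β p a c := by
        rw [← lintegral_union measurableSet_Ioc (Ioc_disjoint_Ioc_of_le le_rfl),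
          Ioc_union_Ioc_eq_Ioc hab hbc, sobIntegral]

end Sobolev

lemma ENNReal.ofReal_div_two_pow (ℓ : ℝ) (k : ℕ) :
    ENNReal.ofReal (ℓ / 2 ^ k) = ENNReal.ofReal ℓ * 2⁻¹ ^ k := by
  rw [div_eq_mul_inv, ← inv_pow, ENNReal.ofReal_mul' (by positivity),
    ENNReal.ofReal_pow (by norm_num), ENNReal.ofReal_inv_of_pos (by norm_num), ENNReal.ofReal_ofNat]

lemma ENNReal.four_mul_div_mul_rpow {J L : ℝ≥0∞} (hL0 : L ≠ 0) (hLt : L ≠ ⊤) (c : ℝ) :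
    4 * (4 * J / L) / (L * 2⁻¹) * L ^ (1 + c) = 32 * J * L ^ (c - 1) := by
  have hL : L⁻¹ * (L⁻¹ * L ^ (1 + c)) = L ^ (c - 1) := by
    rw [← ENNReal.rpow_neg_one, ← ENNReal.rpow_add _ _ hL0 hLt, ← ENNReal.rpow_add _ _ hL0 hLt]
    ring_nf
  rw [div_eq_mul_inv, div_eq_mul_inv, ENNReal.mul_inv (Or.inl hL0) (Or.inl hLt), inv_inv]
  calc 4 * (4 * J * L⁻¹) * (L⁻¹ * 2) * L ^ (1 + c) = 32 * J * (L⁻¹ * (L⁻¹ * L ^ (1 + c))) := by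
        ring
    _ = 32 * J * L ^ (c - 1) := by rw [hL]

section GRR

variable {E : Type*} [PseudoEMetricSpace E] {f g : ℝ → E} {β p a b s t : ℝ}

lemma edist_le_of_sobKernel_le (hp : 0 < p) (hβp : 1 < β * p) {ℓ u v : ℝ} (hℓ : 0 < ℓ) {k : ℕ}
    {J : ℝ≥0∞} (huv : |v - u| ≤ ℓ / 2 ^ k)
    (hK : sobKernel g β p u v ≤
      4 * (4 * J / (ENNReal.ofReal ℓ * 2⁻¹ ^ k)) / (ENNReal.ofReal ℓ * 2⁻¹ ^ (k + 1))) :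
    edist (g u) (g v) ≤
      (32 * J) ^ (1 / p) * ENNReal.ofReal ℓ ^ ((β * p - 1) / p) *
        (2⁻¹ ^ ((β * p - 1) / p)) ^ k := by
  set L := ENNReal.ofReal ℓ * 2⁻¹ ^ k with hL
  have hL0 : L ≠ 0 := mul_ne_zero (ENNReal.ofReal_pos.2 hℓ).ne' (pow_ne_zero _ (by norm_num))
  have hLt : L ≠ ⊤ := ENNReal.mul_ne_top ENNReal.ofReal_ne_top (ENNReal.pow_ne_top (by norm_num))
  have hpow : edist (g u) (g v) ^ p ≤ 32 * J * L ^ (β * p - 1) :=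
    calc edist (g u) (g v) ^ p ≤ sobKernel g β p u v * ENNReal.ofReal (ℓ / 2 ^ k) ^ (1 + β * p) :=
          edist_rpow_le_sobKernel_mul hp (by linarith) huv
      _ ≤ 4 * (4 * J / L) / (L * 2⁻¹) * L ^ (1 + β * p) := by
          rw [ENNReal.ofReal_div_two_pow, mul_assoc, ← pow_succ]; gcongr
      _ = 32 * J * L ^ (β * p - 1) := ENNReal.four_mul_div_mul_rpow hL0 hLt _
  calc edist (g u) (g v) = (edist (g u) (g v) ^ p) ^ (1 / p) := by
        rw [one_div, ENNReal.rpow_rpow_inv hp.ne']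
    _ ≤ (32 * J * L ^ (β * p - 1)) ^ (1 / p) := by gcongr
    _ = _ := by
        rw [ENNReal.mul_rpow_of_nonneg _ _ (by positivity), ← ENNReal.rpow_mul, mul_one_div, hL,
          ENNReal.mul_rpow_of_nonneg _ _ (div_nonneg (by linarith : 0 ≤ β * p - 1) hp.le),
          ← ENNReal.rpow_natCast_mul, mul_comm (k : ℝ), ENNReal.rpow_mul_natCast, mul_assoc]

noncomputable def grrChainBound (β p : ℝ) (J : ℝ≥0∞) (ℓ : ℝ) : ℝ≥0∞ :=
  (32 * J) ^ (1 / p) * ENNReal.ofReal ℓ ^ ((β * p - 1) / p) / (1 - 2⁻¹ ^ ((β * p - 1) / p))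

/-- The chain of `exists_chain_of_lintegral_le` through the nested cells `(x k, x k + ℓ / 2 ^ k]`
converges to `c`, and its steps decrease geometrically. -/
lemma edist_le_of_dyadic_cells (hg : Continuous g) (hp : 0 < p) (hβp : 1 < β * p) {ℓ c : ℝ}
    (hℓ : 0 < ℓ) {x : ℕ → ℝ}
    (hx : ∀ k, Ioc (x (k + 1)) (x (k + 1) + ℓ / 2 ^ (k + 1)) ⊆ Ioc (x k) (x k + ℓ / 2 ^ k))
    (hc : ∀ k, c ∈ Icc (x k) (x k + ℓ / 2 ^ k)) {J : ℝ≥0∞} (hJ0 : J ≠ 0) (hJt : J ≠ ⊤)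
    (hJ : ∀ k, ∫⁻ v in Ioc (x k) (x k + ℓ / 2 ^ k),
      ∫⁻ u in Ioc (x (k + 1)) (x (k + 1) + ℓ / 2 ^ (k + 1)), sobKernel g β p u v ≤ J)
    {w : ℝ} (hw : w ∈ Ioc (x 0) (x 0 + ℓ))
    (hw' : ∫⁻ u in Ioc (x 1) (x 1 + ℓ / 2), sobKernel g β p u w ≤ 4 * J / ENNReal.ofReal ℓ) :
    edist (g w) (g c) ≤ grrChainBound β p J ℓ := by
  have hvol : ∀ k, volume (Ioc (x k) (x k + ℓ / 2 ^ k)) = ENNReal.ofReal ℓ * 2⁻¹ ^ k := fun k => by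
    rw [Real.volume_Ioc, add_sub_cancel_left, ENNReal.ofReal_div_two_pow]
  obtain ⟨w, rfl, hchain⟩ := exists_chain_of_lintegral_le (measurable_sobKernel hg)
    (fun k => hvol k ▸ mul_ne_zero (ENNReal.ofReal_pos.2 hℓ).ne' (pow_ne_zero _ (by norm_num)))
    (fun k => hvol k ▸ ENNReal.mul_ne_top ENNReal.ofReal_ne_top (ENNReal.pow_ne_top (by norm_num)))
    hJ0 hJt hJ (by simpa using hw) (by simpa [hvol] using hw')
  refine edist_le_of_edist_le_geometric_of_tendsto₀ (f := fun k => g (w k)) _ _ (fun k => ?_) ?_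
  · obtain ⟨⟨h1, h2⟩, hK⟩ := hchain k
    obtain ⟨h3, h4⟩ := hx k (hchain (k + 1)).1
    rw [hvol, hvol] at hK
    rw [edist_comm]
    exact edist_le_of_sobKernel_le hp hβp hℓ (by rw [abs_le]; constructor <;> linarith) hK
  · refine (hg.tendsto c).comp (tendsto_iff_dist_tendsto_zero.2 (squeeze_zero
      (fun _ => dist_nonneg) (fun k => ?_)
      ((tendsto_const_nhds (x := ℓ)).div_atTop (tendsto_pow_atTop_atTop_of_one_lt one_lt_two))))
    obtain ⟨h1, h2⟩ := (hchain k).1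
    obtain ⟨h3, h4⟩ := hc k
    rw [Real.dist_eq, abs_le]; constructor <;> linarith

lemma div_two_pow_succ_le {ℓ : ℝ} (hℓ : 0 ≤ ℓ) (k : ℕ) : ℓ / 2 ^ (k + 1) ≤ ℓ / 2 ^ k :=
  div_le_div_of_nonneg_left hℓ (by positivity) (pow_le_pow_right₀ one_le_two k.le_succ)

lemma edist_le_grrChainBound_left (hg : Continuous g) (hp : 0 < p) (hβp : 1 < β * p)
    (hab : a < b) {J : ℝ≥0∞} (hJ : sobIntegral g β p a b ≤ J) (hJ0 : J ≠ 0) (hJt : J ≠ ⊤)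
    {w : ℝ} (hw : w ∈ Ioc a b)
    (hw' : ∫⁻ u in Ioc a (a + (b - a) / 2), sobKernel g β p u w ≤ 4 * J / ENNReal.ofReal (b - a)) :
    edist (g w) (g a) ≤ grrChainBound β p J (b - a) := by
  have hℓ : 0 < b - a := sub_pos.2 hab
  have hcell : ∀ k : ℕ, Ioc a (a + (b - a) / 2 ^ k) ⊆ Ioc a b := fun k =>
    Ioc_subset_Ioc_right
      (by linarith [div_le_self hℓ.le (one_le_pow₀ (one_le_two (α := ℝ)) (n := k))])
  refine edist_le_of_dyadic_cells hg hp hβp (c := a) (x := fun _ => a) hℓ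
    (fun k => Ioc_subset_Ioc_right (by linarith [div_two_pow_succ_le hℓ.le k]))
    (fun k => ⟨le_rfl, le_add_of_nonneg_right (by positivity)⟩) hJ0 hJt
    (fun k => (setLIntegral_setLIntegral_sobKernel_le (hcell k) (hcell (k + 1))).trans hJ)
    (by rwa [add_sub_cancel]) hw'

lemma edist_le_grrChainBound_right (hg : Continuous g) (hp : 0 < p) (hβp : 1 < β * p)
    (hab : a < b) {J : ℝ≥0∞} (hJ : sobIntegral g β p a b ≤ J) (hJ0 : J ≠ 0) (hJt : J ≠ ⊤)
    {w : ℝ} (hw : w ∈ Ioc a b)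
    (hw' : ∫⁻ u in Ioc (b - (b - a) / 2) b, sobKernel g β p u w ≤ 4 * J / ENNReal.ofReal (b - a)) :
    edist (g w) (g b) ≤ grrChainBound β p J (b - a) := by
  have hℓ : 0 < b - a := sub_pos.2 hab
  have hcell : ∀ k : ℕ, Ioc (b - (b - a) / 2 ^ k) (b - (b - a) / 2 ^ k + (b - a) / 2 ^ k) ⊆
      Ioc a b := fun k => by
    rw [sub_add_cancel]
    exact Ioc_subset_Ioc_left
      (by linarith [div_le_self hℓ.le (one_le_pow₀ (one_le_two (α := ℝ)) (n := k))])
  refine edist_le_of_dyadic_cells hg hp hβp (c := b) (x := fun k => b - (b - a) / 2 ^ k) hℓ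
    (fun k => by
      simp only [sub_add_cancel]
      exact Ioc_subset_Ioc_left (by linarith [div_two_pow_succ_le hℓ.le k]))
    (fun k => ⟨sub_le_self _ (by positivity), by simp⟩) hJ0 hJt
    (fun k => (setLIntegral_setLIntegral_sobKernel_le (hcell k) (hcell (k + 1))).trans hJ)
    (by simpa using hw) (by simpa using hw')

noncomputable def grrConst (β p : ℝ) : ℝ≥0∞ :=
  2 ^ p * 32 / (1 - 2⁻¹ ^ ((β * p - 1) / p)) ^ p

lemma grrConst_ne_top (hp : 0 < p) (hβp : 1 < β * p) : grrConst β p ≠ ⊤ := by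
  have hr : 2⁻¹ ^ ((β * p - 1) / p) < (1 : ℝ≥0∞) :=
    ENNReal.rpow_lt_one (by norm_num) (div_pos (by linarith) hp)
  exact ENNReal.div_ne_top (by finiteness)
    (ENNReal.rpow_pos (tsub_pos_of_lt hr) (by finiteness)).ne'

lemma grrConst_ne_zero (hp : 0 < p) : grrConst β p ≠ 0 :=
  ENNReal.div_ne_zero.2 ⟨by positivity,
    ENNReal.rpow_ne_top_of_nonneg hp.le (ne_top_of_le_ne_top ENNReal.one_ne_top tsub_le_self)⟩

lemma two_mul_grrChainBound_rpow (hp : 0 < p) (J : ℝ≥0∞) (ℓ : ℝ) :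
    (2 * grrChainBound β p J ℓ) ^ p = grrConst β p * ENNReal.ofReal ℓ ^ (β * p - 1) * J := by
  rw [grrChainBound, ENNReal.mul_rpow_of_nonneg _ _ hp.le, ENNReal.div_rpow_of_nonneg _ _ hp.le,
    ENNReal.mul_rpow_of_nonneg _ _ hp.le, ← ENNReal.rpow_mul, ← ENNReal.rpow_mul,
    one_div_mul_cancel hp.ne', div_mul_cancel₀ _ hp.ne', ENNReal.rpow_one, grrConst]
  simp only [div_eq_mul_inv]
  ring

lemma measurable_setLIntegral_sobKernel (hg : Continuous g) (S : Set ℝ) :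
    Measurable fun v => ∫⁻ u in S, sobKernel g β p u v :=
  ((measurable_sobKernel hg).comp measurable_swap).lintegral_prod_right'

/-- Garsia–Rodemich–Rumsey, for an upper bound `J ≠ 0` of the double integral: by Markov's
inequality some `w ∈ (a, b]` starts dyadic chains both to `a` and to `b`. -/
lemma edist_rpow_le_of_sobIntegral_le (hg : Continuous g) (hp : 0 < p) (hβp : 1 < β * p)
    (hab : a < b) {J : ℝ≥0∞} (hJ : sobIntegral g β p a b ≤ J) (hJ0 : J ≠ 0) (hJt : J ≠ ⊤) :
    edist (g a) (g b) ^ p ≤ grrConst β p * ENNReal.ofReal (b - a) ^ (β * p - 1) * J := by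
  have hhalf : ∀ {S : Set ℝ}, S ⊆ Ioc a b →
      ∫⁻ v in Ioc a b, ∫⁻ u in S, sobKernel g β p u v ≤ J := fun hS =>
    (setLIntegral_setLIntegral_sobKernel_le subset_rfl hS).trans hJ
  obtain ⟨w, hw, hwa, hwb⟩ := exists_mem_le_four_mul_div (μ := volume) (A := Ioc a b)
    (by simp [hab]) (by simp)
    (measurable_setLIntegral_sobKernel hg (Ioc a (a + (b - a) / 2))).aemeasurable
    (measurable_setLIntegral_sobKernel hg (Ioc (b - (b - a) / 2) b)).aemeasurable hJ0 hJt hJ0 hJt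
    (hhalf (Ioc_subset_Ioc_right (by linarith))) (hhalf (Ioc_subset_Ioc_left (by linarith)))
  rw [Real.volume_Ioc] at hwa hwb
  rw [← two_mul_grrChainBound_rpow hp, two_mul]
  gcongr
  exact (edist_triangle_left _ _ (g w)).trans
    (add_le_add (edist_le_grrChainBound_left hg hp hβp hab hJ hJ0 hJt hw hwa)
      (edist_le_grrChainBound_right hg hp hβp hab hJ hJ0 hJt hw hwb))

lemma edist_rpow_le_grrConst_mul_of_continuous (hg : Continuous g) (hp : 0 < p)
    (hβp : 1 < β * p) (hab : a < b) :
    edist (g a) (g b) ^ p ≤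
      grrConst β p * ENNReal.ofReal (b - a) ^ (β * p - 1) * sobIntegral g β p a b := by
  set K := grrConst β p * ENNReal.ofReal (b - a) ^ (β * p - 1)
  have hK0 : K ≠ 0 :=
    mul_ne_zero (grrConst_ne_zero hp) (ENNReal.ofReal_rpow_ne_zero (sub_pos.2 hab) _)
  have hKt : K ≠ ⊤ :=
    ENNReal.mul_ne_top (grrConst_ne_top hp hβp) (ENNReal.ofReal_rpow_ne_top (sub_pos.2 hab) _)
  rcases eq_or_ne (sobIntegral g β p a b) ⊤ with hJ | hJ
  · simp [hJ, ENNReal.mul_top hK0]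
  refine ENNReal.le_of_forall_pos_le_add fun ε hε _ => ?_
  have hη : (ε : ℝ≥0∞) / K ≠ 0 := ENNReal.div_ne_zero.2 ⟨by simpa using hε.ne', hKt⟩
  calc edist (g a) (g b) ^ p ≤ K * (sobIntegral g β p a b + ε / K) :=
        edist_rpow_le_of_sobIntegral_le hg hp hβp hab le_self_add (by simp [hη])
          (ENNReal.add_ne_top.2 ⟨hJ, ENNReal.div_ne_top ENNReal.coe_ne_top hK0⟩)
    _ = K * sobIntegral g β p a b + ε := by rw [mul_add, ENNReal.mul_div_cancel hK0 hKt]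

lemma edist_rpow_le_grrConst_mul (hg : ContinuousOn g (Icc a b)) (hp : 0 < p)
    (hβp : 1 < β * p) (hab : a < b) :
    edist (g a) (g b) ^ p ≤
      grrConst β p * ENNReal.ofReal (b - a) ^ (β * p - 1) * sobIntegral g β p a b := by
  obtain ⟨g', hg', heq⟩ := exists_continuous_eqOn_Icc hab.le hg
  rw [heq (left_mem_Icc.2 hab.le), heq (right_mem_Icc.2 hab.le), sobIntegral_congr heq]
  exact edist_rpow_le_grrConst_mul_of_continuous hg' hp hβp hab

lemma VNorm_le_sobNorm (hf : ContinuousOn f (Icc s t)) (hp : 0 < p) (hβp : 1 < β * p) :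
    VNorm f β p s t ≤ grrConst β p ^ (1 / p) * sobNorm f β p s t := by
  rw [VNorm_eq_rieszVar_rpow, sobNorm_eq_sobIntegral_rpow,
    ← ENNReal.mul_rpow_of_nonneg _ _ (by positivity)]
  refine ENNReal.rpow_le_rpow (iSup₂_le fun n u => iSup_le fun hP => ?_) (by positivity)
  calc rieszSum f β p n u
      ≤ ∑ i ∈ Finset.range n, grrConst β p * sobIntegral f β p (u i) (u (i + 1)) := by
        refine Finset.sum_le_sum fun i hi => ?_
        have hi := Finset.mem_range.1 hi
        have hlt := hP.2.2 i hi
        rw [ENNReal.div_le_iff (ENNReal.ofReal_rpow_ne_zero (sub_pos.2 hlt) _)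
          (ENNReal.ofReal_rpow_ne_top (sub_pos.2 hlt) _), mul_right_comm]
        exact edist_rpow_le_grrConst_mul (hf.mono (Icc_subset_Icc (hP.mem_Icc hi.le).1
          (hP.mem_Icc hi).2)) hp hβp hlt
    _ = grrConst β p * ∑ i ∈ Finset.range n, sobIntegral f β p (u i) (u (i + 1)) :=
        (Finset.mul_sum ..).symm
    _ ≤ grrConst β p * sobIntegral f β p s t := by
        gcongr; exact intervalSuperadditive_sobIntegral.sum_le_of_isPart hP

end GRR

lemma lintegral_comp_abs (φ : ℝ → ℝ≥0∞) : ∫⁻ x, φ |x| = 2 * ∫⁻ x in Ioi 0, φ x := by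
  have hpos : ∫⁻ x in Ioi 0, φ |x| = ∫⁻ x in Ioi 0, φ x :=
    setLIntegral_congr_fun measurableSet_Ioi fun x hx => by rw [abs_of_pos hx]
  have hneg : ∫⁻ x in Iic 0, φ |x| = ∫⁻ x in Ioi 0, φ x :=
    calc ∫⁻ x in Iic 0, φ |x| = ∫⁻ x in Neg.neg ⁻¹' Ici 0, φ (-x) := by
          rw [neg_preimage, neg_Ici, neg_zero]
          exact setLIntegral_congr_fun measurableSet_Iic fun x hx => by rw [abs_of_nonpos hx]
      _ = ∫⁻ x in Ici 0, φ x :=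
          (Measure.measurePreserving_neg volume).setLIntegral_comp_preimage_emb
            measurableEmbedding_neg _ _
      _ = ∫⁻ x in Ioi 0, φ x := (setLIntegral_congr Ioi_ae_eq_Ici).symm
  calc ∫⁻ x, φ |x| = ∫⁻ x in Iic 0 ∪ Ioi 0, φ |x| := by rw [Iic_union_Ioi, setLIntegral_univ]
    _ = 2 * ∫⁻ x in Ioi 0, φ x := by
        rw [lintegral_union measurableSet_Ioi (Iic_disjoint_Ioi le_rfl), hneg, hpos, two_mul]

section Fubini

variable {E : Type*} [PseudoEMetricSpace E] {f g : ℝ → E} {β β₀ p s t h : ℝ}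

/-- The integrand of `sobIntegral` in the coordinates `(v, h) = (v, u - v)`. -/
noncomputable def shiftedSobKernel (g : ℝ → E) (β p s t : ℝ) : ℝ × ℝ → ℝ≥0∞ :=
  {q | q.1 ∈ Ioc s t ∧ q.1 + q.2 ∈ Ioc s t}.indicator fun q => sobKernel g β p (q.1 + q.2) q.1

lemma shiftedSobKernel_of_mem {v h : ℝ} (hvh : v ∈ Ioc s t ∧ v + h ∈ Ioc s t) :
    shiftedSobKernel g β p s t (v, h) = sobKernel g β p (v + h) v :=
  indicator_of_mem (s := {q : ℝ × ℝ | q.1 ∈ Ioc s t ∧ q.1 + q.2 ∈ Ioc s t}) hvh _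

lemma shiftedSobKernel_of_notMem {v h : ℝ} (hvh : ¬ (v ∈ Ioc s t ∧ v + h ∈ Ioc s t)) :
    shiftedSobKernel g β p s t (v, h) = 0 :=
  indicator_of_notMem (s := {q : ℝ × ℝ | q.1 ∈ Ioc s t ∧ q.1 + q.2 ∈ Ioc s t}) hvh _

lemma measurable_shiftedSobKernel (hg : Continuous g) :
    Measurable (shiftedSobKernel g β p s t) :=
  ((measurable_sobKernel hg).comp
      ((measurable_fst.add measurable_snd).prodMk measurable_fst)).indicator
    ((measurable_fst measurableSet_Ioc).inter
      ((measurable_fst.add measurable_snd) measurableSet_Ioc))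

lemma lintegral_shiftedSobKernel_eq_indicator (v : ℝ) :
    ∫⁻ h, shiftedSobKernel g β p s t (v, h) =
      (Ioc s t).indicator (fun v => ∫⁻ u in Ioc s t, sobKernel g β p u v) v := by
  by_cases hv : v ∈ Ioc s t
  · rw [indicator_of_mem hv, ← lintegral_indicator measurableSet_Ioc,
      ← lintegral_add_left_eq_self (fun u => (Ioc s t).indicator (sobKernel g β p · v) u) v]
    congr 1 with h
    by_cases hh : v + h ∈ Ioc s t
    · rw [indicator_of_mem hh, shiftedSobKernel_of_mem ⟨hv, hh⟩]
    · rw [indicator_of_notMem hh, shiftedSobKernel_of_notMem fun hq => hh hq.2]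
  · rw [indicator_of_notMem hv]
    exact (lintegral_congr fun h => shiftedSobKernel_of_notMem fun hq => hv hq.1).trans
      lintegral_zero

lemma sobIntegral_eq_lintegral_shiftedSobKernel (hg : Continuous g) :
    sobIntegral g β p s t = ∫⁻ h, ∫⁻ v, shiftedSobKernel g β p s t (v, h) := by
  rw [← lintegral_lintegral_swap (f := fun v h => shiftedSobKernel g β p s t (v, h))
    (measurable_shiftedSobKernel hg).aemeasurable]
  simp only [lintegral_shiftedSobKernel_eq_indicator, lintegral_indicator measurableSet_Ioc,
    sobIntegral]

lemma shiftedSobKernel_add_neg (v h : ℝ) :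
    shiftedSobKernel g β p s t (v + h, -h) = shiftedSobKernel g β p s t (v, h) := by
  by_cases hq : v ∈ Ioc s t ∧ v + h ∈ Ioc s t
  · rw [shiftedSobKernel_of_mem (by simpa using hq.symm), shiftedSobKernel_of_mem hq,
      add_neg_cancel_right, sobKernel_comm]
  · rw [shiftedSobKernel_of_notMem fun hq' => hq ⟨by simpa using hq'.2, hq'.1⟩,
      shiftedSobKernel_of_notMem hq]

lemma lintegral_shiftedSobKernel_neg (h : ℝ) :
    ∫⁻ v, shiftedSobKernel g β p s t (v, -h) = ∫⁻ v, shiftedSobKernel g β p s t (v, h) := by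
  rw [← lintegral_add_right_eq_self (fun v => shiftedSobKernel g β p s t (v, -h)) h]
  exact lintegral_congr fun v => shiftedSobKernel_add_neg v h

lemma lintegral_shiftedSobKernel_of_nonneg (hg : Continuous g) (hh : 0 ≤ h) :
    ∫⁻ v, shiftedSobKernel g β p s t (v, h) =
      shiftIntegral g p s t h / ENNReal.ofReal h ^ (1 + β * p) := by
  have hpt : ∀ v, shiftedSobKernel g β p s t (v, h) = (Ioc s (t - h)).indicator
      (fun v => edist (g v) (g (v + h)) ^ p * (ENNReal.ofReal h ^ (1 + β * p))⁻¹) v := by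
    intro v
    have hmem : v ∈ Ioc s t ∧ v + h ∈ Ioc s t ↔ v ∈ Ioc s (t - h) :=
      ⟨fun ⟨⟨h1, _⟩, _, h4⟩ => ⟨h1, by linarith⟩,
        fun ⟨h1, h2⟩ => ⟨⟨h1, by linarith⟩, by linarith, by linarith⟩⟩
    by_cases hv : v ∈ Ioc s (t - h)
    · rw [shiftedSobKernel_of_mem (hmem.2 hv), indicator_of_mem hv, sobKernel,
        edist_comm, div_eq_mul_inv, sub_add_cancel_left, abs_neg, abs_of_nonneg hh]
    · rw [shiftedSobKernel_of_notMem (mt hmem.1 hv), indicator_of_notMem hv]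
  have hm : Measurable fun v => edist (g v) (g (v + h)) ^ p :=
    (hg.edist (hg.comp (continuous_add_const h))).measurable.pow_const p
  rw [lintegral_congr hpt, lintegral_indicator measurableSet_Ioc, lintegral_mul_const _ hm,
    div_eq_mul_inv, shiftIntegral]

lemma sobIntegral_eq_two_mul_lintegral_shiftIntegral_of_continuous (hg : Continuous g) :
    sobIntegral g β p s t =
      2 * ∫⁻ h in Ioi 0, shiftIntegral g p s t h / ENNReal.ofReal h ^ (1 + β * p) := by
  have habs : ∀ h, ∫⁻ v, shiftedSobKernel g β p s t (v, h) =
      ∫⁻ v, shiftedSobKernel g β p s t (v, |h|) := fun h => by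
    rcases le_or_gt 0 h with hh | hh
    · rw [abs_of_nonneg hh]
    · rw [abs_of_neg hh, lintegral_shiftedSobKernel_neg]
  rw [sobIntegral_eq_lintegral_shiftedSobKernel hg, lintegral_congr habs,
    lintegral_comp_abs (fun h => ∫⁻ v, shiftedSobKernel g β p s t (v, h))]
  congr 1
  exact setLIntegral_congr_fun measurableSet_Ioi fun h hh =>
    lintegral_shiftedSobKernel_of_nonneg hg (le_of_lt hh)

lemma shiftIntegral_congr (heq : EqOn f g (Icc s t)) (hh : 0 ≤ h) :
    shiftIntegral f p s t h = shiftIntegral g p s t h :=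
  setLIntegral_congr_fun measurableSet_Ioc fun r ⟨h1, h2⟩ => by
    rw [heq ⟨h1.le, by linarith⟩, heq ⟨by linarith, by linarith⟩]

lemma sobIntegral_eq_two_mul_lintegral_shiftIntegral (hf : ContinuousOn f (Icc s t))
    (hst : s ≤ t) :
    sobIntegral f β p s t =
      2 * ∫⁻ h in Ioi 0, shiftIntegral f p s t h / ENNReal.ofReal h ^ (1 + β * p) := by
  obtain ⟨g, hg, heq⟩ := exists_continuous_eqOn_Icc hst hf
  rw [sobIntegral_congr heq, sobIntegral_eq_two_mul_lintegral_shiftIntegral_of_continuous hg]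
  congr 1
  exact setLIntegral_congr_fun measurableSet_Ioi fun h hh => by
    rw [shiftIntegral_congr heq (le_of_lt hh)]

lemma sobIntegral_le_nikNorm (hf : ContinuousOn f (Icc s t)) (hp : 0 < p) (hst : s ≤ t) :
    sobIntegral f β p s t ≤
      2 * (∫⁻ h in Ioc 0 (t - s), ENNReal.ofReal h ^ ((β₀ - β) * p - 1)) *
        nikNorm f β₀ p s t ^ p := by
  set N := nikNorm f β₀ p s t ^ p
  have hpt : ∀ h ∈ Ioi (0 : ℝ), shiftIntegral f p s t h / ENNReal.ofReal h ^ (1 + β * p) ≤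
      (Ioc 0 (t - s)).indicator (fun h => ENNReal.ofReal h ^ ((β₀ - β) * p - 1) * N) h := by
    intro h hh
    by_cases hht : h ≤ t - s
    · rw [indicator_of_mem (show h ∈ Ioc 0 (t - s) from ⟨hh, hht⟩)]
      calc shiftIntegral f p s t h / ENNReal.ofReal h ^ (1 + β * p)
          ≤ ENNReal.ofReal h ^ (β₀ * p) * N / ENNReal.ofReal h ^ (1 + β * p) := by
            gcongr; exact shiftIntegral_le_nikNorm hp hh hht
        _ = ENNReal.ofReal h ^ ((β₀ - β) * p - 1) * N := by
            rw [show β₀ * p = (β₀ - β) * p - 1 + (1 + β * p) by ring,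
              ENNReal.ofReal_rpow_add hh, mul_right_comm, ENNReal.mul_div_cancel_right
                (ENNReal.ofReal_rpow_ne_zero hh _) (ENNReal.ofReal_rpow_ne_top hh _)]
    · have hempty : Ioc s (t - h) = ∅ := Ioc_eq_empty (by linarith)
      simp [shiftIntegral, hempty, indicator_of_notMem (fun hmem : h ∈ Ioc 0 (t - s) => hht hmem.2)]
  rw [sobIntegral_eq_two_mul_lintegral_shiftIntegral hf hst, mul_assoc]
  gcongr
  calc ∫⁻ h in Ioi 0, shiftIntegral f p s t h / ENNReal.ofReal h ^ (1 + β * p)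
      ≤ ∫⁻ h in Ioi 0, (Ioc 0 (t - s)).indicator
          (fun h => ENNReal.ofReal h ^ ((β₀ - β) * p - 1) * N) h :=
        setLIntegral_mono (((ENNReal.measurable_ofReal.pow_const _).mul_const _).indicator
          measurableSet_Ioc) hpt
    _ = (∫⁻ h in Ioc 0 (t - s), ENNReal.ofReal h ^ ((β₀ - β) * p - 1)) * N := by
        rw [setLIntegral_indicator measurableSet_Ioc, inter_eq_left.2 Ioc_subset_Ioi_self,
          lintegral_mul_const _ (ENNReal.measurable_ofReal.pow_const _)]

lemma sobNorm_le_nikNorm_s12 (hf : ContinuousOn f (Icc s t)) (hp : 0 < p) :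
    sobNorm f β p s t ≤
      (2 * ∫⁻ h in Ioc 0 (t - s), ENNReal.ofReal h ^ ((β₀ - β) * p - 1)) ^ (1 / p) *
        nikNorm f β₀ p s t := by
  rcases lt_or_ge t s with hts | hst
  · simp [sobNorm, Ioc_eq_empty_of_le hts.le, ENNReal.zero_rpow_of_pos (inv_pos.2 hp)]
  calc sobNorm f β p s t
      ≤ (2 * (∫⁻ h in Ioc 0 (t - s), ENNReal.ofReal h ^ ((β₀ - β) * p - 1)) *
          nikNorm f β₀ p s t ^ p) ^ (1 / p) := by
        rw [sobNorm_eq_sobIntegral_rpow]; gcongr; exact sobIntegral_le_nikNorm hf hp hst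
    _ = _ := by
        rw [ENNReal.mul_rpow_of_nonneg _ _ (by positivity), one_div, ENNReal.rpow_rpow_inv hp.ne']

lemma setLIntegral_ofReal_rpow_ne_top {c : ℝ} (hc : -1 < c) (L : ℝ) :
    ∫⁻ h in Ioc 0 L, ENNReal.ofReal h ^ c ≠ ⊤ := by
  rcases le_or_gt L 0 with hL | hL
  · simp [Ioc_eq_empty_of_le hL]
  have hint : IntegrableOn (fun h : ℝ => h ^ c) (Ioc 0 L) :=
    (intervalIntegrable_iff_integrableOn_Ioc_of_le hL.le).1
      (intervalIntegral.intervalIntegrable_rpow' hc)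
  refine (lt_of_eq_of_lt (setLIntegral_congr_fun measurableSet_Ioc fun h hh => ?_) hint.2).ne
  rw [ENNReal.ofReal_rpow_of_pos hh.1, Real.enorm_of_nonneg (by positivity [hh.1])]

end Fubini

theorem riesz_nikolskii_inclusions_general {E : Type*} [PseudoEMetricSpace E] (T δ p ε : ℝ)
    (hp : 1 < p) (hδp : 1 / p < δ)
    (hε : 0 < ε) :
    ∀ f : ℝ → E, ContinuousOn f (Set.Icc 0 T) →
      (sobNorm f δ p 0 T ≠ ⊤ → VNorm f δ p 0 T ≠ ⊤) ∧
      (VNorm f δ p 0 T ≠ ⊤ → nikNorm f δ p 0 T ≠ ⊤) ∧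
      (nikNorm f (δ + ε) p 0 T ≠ ⊤ → nikHatNorm f δ p 0 T ≠ ⊤) ∧
      (nikHatNorm f δ p 0 T ≠ ⊤ → nikNorm f δ p 0 T ≠ ⊤) := by
  intro f hf
  have hp0 : 0 < p := by linarith
  have hδp' : 1 < δ * p := by rwa [div_lt_iff₀ hp0] at hδp
  have hβp : 1 < (δ + ε / 2) * p := by nlinarith
  have hC : ∀ {c : ℝ≥0∞}, c ≠ ⊤ → c ^ (1 / p) ≠ ⊤ := ENNReal.rpow_ne_top_of_nonneg (by positivity)
  have hlen : ∀ {γ : ℝ}, 0 ≤ γ → 2 * ENNReal.ofReal (T - 0) ^ γ ≠ ⊤ := fun hγ =>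
    ENNReal.mul_ne_top ENNReal.ofNat_ne_top (ENNReal.rpow_ne_top_of_nonneg hγ ENNReal.ofReal_ne_top)
  refine ⟨fun hW => ?_, fun hV => ?_, fun hN => ?_, fun hN => ?_⟩
  · exact ne_top_of_le_ne_top (ENNReal.mul_ne_top (hC (grrConst_ne_top hp0 hδp')) hW)
      (VNorm_le_sobNorm hf hp0 hδp')
  · exact ne_top_of_le_ne_top (ENNReal.mul_ne_top (hC (hlen (by simp))) hV)
      (nikNorm_le_VNorm hp0 le_rfl)
  · have hW : sobNorm f (δ + ε / 2) p 0 T ≠ ⊤ := ne_top_of_le_ne_top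
      (ENNReal.mul_ne_top (hC (ENNReal.mul_ne_top ENNReal.ofNat_ne_top
        (setLIntegral_ofReal_rpow_ne_top (by nlinarith) _))) hN) (sobNorm_le_nikNorm_s12 hf hp0)
    have hV := ne_top_of_le_ne_top (ENNReal.mul_ne_top (hC (grrConst_ne_top hp0 hβp)) hW)
      (VNorm_le_sobNorm hf hp0 hβp)
    exact ne_top_of_le_ne_top (ENNReal.mul_ne_top (hC (hlen (by nlinarith))) hV)
      (nikHatNorm_le_VNorm hp0 (by linarith))
  · exact ne_top_of_le_ne_top hN (nikNorm_le_nikHatNorm hp0)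

/-- inclusions `W^{δ,p} ⊆ V^{δ,p} ⊆ N^{δ,p}` and
`N^{δ+ε,p} ⊆ \hat N^{δ,p} ⊆ N^{δ,p}`. -/
theorem riesz_nikolskii_inclusions {E : Type*} [PseudoEMetricSpace E] (T δ p ε : ℝ)
    (hT : 0 < T) (hδ : 0 < δ) (hδ1 : δ < 1) (hp : 1 < p) (hδp : 1 / p < δ)
    (hε : 0 < ε) (hε1 : ε < 1 - δ) :
    ∀ f : ℝ → E, ContinuousOn f (Set.Icc 0 T) →
      (sobNorm f δ p 0 T ≠ ⊤ → VNorm f δ p 0 T ≠ ⊤) ∧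
      (VNorm f δ p 0 T ≠ ⊤ → nikNorm f δ p 0 T ≠ ⊤) ∧
      (nikNorm f (δ + ε) p 0 T ≠ ⊤ → nikHatNorm f δ p 0 T ≠ ⊤) ∧
      (nikHatNorm f δ p 0 T ≠ ⊤ → nikNorm f δ p 0 T ≠ ⊤) :=
  riesz_nikolskii_inclusions_general T δ p ε hp hδp hε
end
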